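/- arXiv:1010.3786 — 5 statements merged into one kernel-verified Lean document; each statement's English description precedes it below -/
import Mathlib

section
/- Let G be a finite solvable group that is not nilpotent, and suppose N = G^∞ (the intersection of all normal subgroups with nilpotent quotient) is the unique minimal characteristic subgroup of G. Then N is an elementary abelian Sylow q-subgroup of G for some prime q. -/
open Subgroup
open scoped commutatorElement

lemma aux_commute_of_coprime_orderOf {Q : Type*} [Group Q] [Finite Q]
    (hnil : Group.IsNilpotent Q) {a b : Q} (h : Nat.Coprime (orderOf a) (orderOf b)) :
    Commute a b := by
  obtain ⟨e⟩ := ((isNilpotent_of_finite_tfae (G := Q)).out 0 4).mp hnil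
  set ta := e.symm a with hta
  set tb := e.symm b with htb
  have key : ∀ (p : (Nat.card Q).primeFactors) (P : Sylow p Q),
      Commute (ta p P) (tb p P) := by
    intro p P
    haveI : Fact (Nat.Prime (p : ℕ)) := ⟨Nat.prime_of_mem_primeFactors p.2⟩
    set f : (∀ p : (Nat.card Q).primeFactors, ∀ P : Sylow p Q, (P : Subgroup Q)) →*
        ((P : Subgroup Q)) :=
      (Pi.evalMonoidHom (fun P : Sylow p Q => ((P : Subgroup Q) : Type _)) P).comp
        (Pi.evalMonoidHom (fun p : (Nat.card Q).primeFactors => ∀ P : Sylow p Q, ((P : Subgroup Q) : Type _)) p) with hf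
    have hea : orderOf (e.symm a) = orderOf a :=
      orderOf_injective e.symm.toMonoidHom e.symm.injective a
    have heb : orderOf (e.symm b) = orderOf b :=
      orderOf_injective e.symm.toMonoidHom e.symm.injective b
    have ha : orderOf (ta p P) ∣ orderOf a := hea ▸ orderOf_map_dvd f ta
    have hb : orderOf (tb p P) ∣ orderOf b := heb ▸ orderOf_map_dvd f tb
    obtain ⟨i, hi⟩ := IsPGroup.iff_orderOf.mp P.isPGroup' (ta p P)
    obtain ⟨j, hj⟩ := IsPGroup.iff_orderOf.mp P.isPGroup' (tb p P)
    rcases Nat.eq_zero_or_pos i with hi0 | hipos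
    · have : ta p P = 1 := by
        rw [← orderOf_eq_one_iff, hi, hi0, pow_zero]
      rw [this]; exact Commute.one_left _
    rcases Nat.eq_zero_or_pos j with hj0 | hjpos
    · have : tb p P = 1 := by
        rw [← orderOf_eq_one_iff, hj, hj0, pow_zero]
      rw [this]; exact Commute.one_right _
    exfalso
    have hp : (p : ℕ) ∣ orderOf a := dvd_trans (hi ▸ dvd_pow_self _ hipos.ne') ha
    have hp' : (p : ℕ) ∣ orderOf b := dvd_trans (hj ▸ dvd_pow_self _ hjpos.ne') hb
    exact Nat.Prime.one_lt (Fact.out : Nat.Prime (p : ℕ)) |>.ne'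
      (Nat.eq_one_of_dvd_coprimes h hp hp')
  have hcomm : Commute ta tb := by
    show ta * tb = tb * ta
    funext p P
    exact key p P
  have := hcomm.map e.toMonoidHom
  simpa [hta, htb] using this

lemma aux_le_of_pgroup_sup {G : Type*} [Group G] [Finite G] {q : ℕ} (hq : q.Prime)
    {P Q : Subgroup G} (hPQ : P ≤ Q) (hQ : IsPGroup q ↥Q) (hind : ¬ q ∣ P.index) :
    Q ≤ P := by
  haveI : Fact q.Prime := ⟨hq⟩
  have h1 : P.relIndex Q * Q.index = P.index := relIndex_mul_index hPQ
  have h2 : P.relIndex Q ∣ P.index := ⟨Q.index, h1.symm⟩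
  obtain ⟨n, hn⟩ := IsPGroup.iff_card.mp hQ
  have h3 : P.relIndex Q ∣ q ^ n := hn ▸ index_dvd_card (G := ↥Q) (H := P.subgroupOf Q)
  obtain ⟨j, hj, hrel⟩ := (Nat.dvd_prime_pow hq).mp h3
  rcases Nat.eq_zero_or_pos j with hj0 | hjpos
  · rw [hj0, pow_zero] at hrel
    exact relIndex_eq_one.mp hrel
  · exact absurd (dvd_trans (hrel ▸ dvd_pow_self q hjpos.ne') h2) hind


/-- If `G` is a finite solvable non-nilpotent group and `N = G^∞` (the smallest normal
subgroup with nilpotent quotient) is the unique minimal characteristic subgroup of `G`,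
then `N` is an elementary abelian Sylow `q`-subgroup of `G` for some prime `q`. -/
theorem stmt_0 {G : Type*} [Group G] [Fintype G] [Group.IsSolvable G]
    (hGnil : ¬ Group.IsNilpotent G)
    (N : Subgroup G) [N.Normal]
    (hnilq : Group.IsNilpotent (G ⧸ N))
    (hmin : ∀ (M : Subgroup G) [M.Normal], Group.IsNilpotent (G ⧸ M) → N ≤ M)
    (hNbot : N ≠ ⊥)
    (huniq : ∀ H : Subgroup G, H.Characteristic → H ≠ ⊥ → N ≤ H) :
    ∃ q : ℕ, q.Prime ∧ (∀ x ∈ N, x ^ q = 1) ∧ (∀ x ∈ N, ∀ y ∈ N, x * y = y * x) ∧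
      IsPGroup q ↥N ∧ ¬ q ∣ N.index := by
  classical
  -- N is characteristic
  have hcomapN : ∀ φ : G ≃* G, N ≤ N.comap φ.toMonoidHom := by
    intro φ
    haveI : (N.comap φ.toMonoidHom).Normal := Subgroup.normal_comap _
    have hmapeq : (N.comap φ.toMonoidHom).map φ.toMonoidHom = N :=
      Subgroup.map_comap_eq_self_of_surjective φ.surjective N
    have e2 : (G ⧸ N.comap φ.toMonoidHom) ≃* (G ⧸ N) :=
      QuotientGroup.congr (N.comap φ.toMonoidHom) N φ hmapeq
    exact hmin _ (nilpotent_of_mulEquiv e2.symm)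
  have hcharN : N.Characteristic := by
    rw [Subgroup.characteristic_iff_comap_eq]
    intro φ
    refine le_antisymm (fun x hx => ?_) (hcomapN φ)
    have := hcomapN φ.symm hx
    simpa using this
  haveI := hcharN
  -- N is abelian
  have habN : ∀ x ∈ N, ∀ y ∈ N, x * y = y * x := by
    have hDbot : ⁅N, N⁆ = ⊥ := by
      by_contra hD
      have hND : N ≤ ⁅N, N⁆ := huniq _ inferInstance hD
      have hDN : ⁅N, N⁆ ≤ N := Subgroup.commutator_le_right N N
      have hDeq : ⁅N, N⁆ = N := le_antisymm hDN hND
      -- then ↥N is perfect, contradicting solvability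
      have h0 : Subgroup.map N.subtype ⊤ = N := by
        rw [← MonoidHom.range_eq_map, Subgroup.range_subtype]
      have hmap : Subgroup.map N.subtype (commutator ↥N) = N := by
        rw [commutator_def, Subgroup.map_commutator, h0, hDeq]
      have htop : commutator ↥N = ⊤ := by
        apply Subgroup.map_injective N.subtype_injective
        rw [hmap, h0]
      have hds : ∀ n, derivedSeries ↥N n = ⊤ := by
        intro n
        induction n with
        | zero => exact derivedSeries_zero ↥N
        | succ n ih => rw [derivedSeries_succ, ih, ← commutator_def, htop]
      obtain ⟨n, hn⟩ := (inferInstance : Group.IsSolvable ↥N)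
      rw [hds n] at hn
      apply hNbot
      rw [Subgroup.eq_bot_iff_forall]
      intro x hx
      have : (⟨x, hx⟩ : ↥N) ∈ (⊤ : Subgroup ↥N) := Subgroup.mem_top _
      rw [hn] at this
      simpa [Subgroup.mem_bot] using congrArg (Subgroup.subtype N) this
    intro x hx y hy
    have : ⁅x, y⁆ ∈ (⊥ : Subgroup G) := hDbot ▸ Subgroup.commutator_mem_commutator hx hy
    rw [Subgroup.mem_bot, commutatorElement_eq_one_iff_commute] at this
    exact this
  -- the prime q and elementary abelian structure
  haveI : Nontrivial ↥N := by
    rcases N.bot_or_nontrivial with h | h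
    · exact absurd h hNbot
    · exact h
  have hcard1 : Nat.card ↥N ≠ 1 := by
    have := (Subgroup.one_lt_card_iff_ne_bot N).mpr hNbot
    omega
  set q := (Nat.card ↥N).minFac with hqdef
  have hq : q.Prime := Nat.minFac_prime hcard1
  haveI : Fact q.Prime := ⟨hq⟩
  obtain ⟨xN, hxN⟩ := exists_prime_orderOf_dvd_card' (G := ↥N) q (Nat.minFac_dvd _)
  -- the q-torsion subgroup of N
  set T : Subgroup G :=
    { carrier := {x | x ∈ N ∧ x ^ q = 1}
      one_mem' := ⟨N.one_mem, one_pow q⟩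
      mul_mem' := by
        rintro a b ⟨haN, ha⟩ ⟨hbN, hb⟩
        refine ⟨N.mul_mem haN hbN, ?_⟩
        have hab : Commute a b := habN a haN b hbN
        rw [hab.mul_pow, ha, hb, one_mul]
      inv_mem' := by
        rintro a ⟨haN, ha⟩
        exact ⟨N.inv_mem haN, by rw [inv_pow, ha, inv_one]⟩ } with hTdef
  have hmemT : ∀ x : G, x ∈ T ↔ x ∈ N ∧ x ^ q = 1 := fun x => Iff.rfl
  have hTchar : T.Characteristic := by
    rw [Subgroup.characteristic_iff_comap_eq]
    intro φ
    ext x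
    rw [Subgroup.mem_comap, hmemT, hmemT]
    have hNfix := Subgroup.characteristic_iff_comap_eq.mp hcharN φ
    have h1 : φ x ∈ N ↔ x ∈ N :=
      Iff.intro (fun h => hNfix ▸ (show x ∈ N.comap φ.toMonoidHom from h))
        (fun h => (show x ∈ N.comap φ.toMonoidHom from hNfix.symm ▸ h))
    have h2 : (φ x) ^ q = 1 ↔ x ^ q = 1 := by
      rw [← map_pow, MulEquiv.map_eq_one_iff]
    exact and_congr h1 h2
  have hTbot : T ≠ ⊥ := by
    intro hT
    have hxT : (xN : G) ∈ T := by
      refine ⟨xN.2, ?_⟩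
      have := pow_orderOf_eq_one xN
      rw [hxN] at this
      simpa using congrArg (Subgroup.subtype N) this
    rw [hT, Subgroup.mem_bot] at hxT
    have hx1 : xN = 1 := Subtype.ext (by simpa using hxT)
    rw [hx1, orderOf_one] at hxN
    exact hq.ne_one hxN.symm
  have hNT : N ≤ T := huniq T hTchar hTbot
  have hxq : ∀ x ∈ N, x ^ q = 1 := fun x hx => (hNT hx).2
  have hNp : IsPGroup q ↥N := by
    intro g
    exact ⟨1, by rw [pow_one]; exact Subtype.ext (by simpa using hxq g.1 g.2)⟩
  -- the normal Sylow q-subgroup P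
  set π := QuotientGroup.mk' N with hπ
  obtain ⟨S⟩ : Nonempty (Sylow q (G ⧸ N)) := inferInstance
  have h4 : ∀ (p : ℕ) (_hp : Fact p.Prime) (P : Sylow p (G ⧸ N)),
      (P : Subgroup (G ⧸ N)).Normal :=
    ((isNilpotent_of_finite_tfae (G := G ⧸ N)).out 0 3).mp hnilq
  have hSnormal : (S : Subgroup (G ⧸ N)).Normal := h4 q ⟨hq⟩ S
  set P : Subgroup G := Subgroup.comap π (S : Subgroup (G ⧸ N)) with hPdef
  have hNP : N ≤ P := by
    intro x hx
    show π x ∈ (S : Subgroup (G ⧸ N))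
    have : π x = 1 := by
      rw [hπ, QuotientGroup.mk'_apply, QuotientGroup.eq_one_iff]
      exact hx
    rw [this]
    exact one_mem _
  haveI hPnormal : P.Normal := Subgroup.normal_comap π
  have hkerN : π.ker = N := QuotientGroup.ker_mk' N
  have hPgrp : IsPGroup q ↥P := by
    apply IsPGroup.comap_of_ker_isPGroup S.isPGroup' π
    rw [hkerN]
    exact hNp
  have hPindex : ¬ q ∣ P.index := by
    rw [hPdef, Subgroup.index_comap_of_surjective _ (QuotientGroup.mk'_surjective N)]
    exact S.not_dvd_index
  -- P is characteristic
  have hPchar : P.Characteristic := by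
    rw [Subgroup.characteristic_iff_comap_eq]
    intro φ
    set P₂ := P.comap φ.toMonoidHom with hP2
    haveI : P₂.Normal := Subgroup.normal_comap _
    have hP₂grp : IsPGroup q ↥P₂ := hPgrp.comap_of_injective φ.toMonoidHom φ.injective
    have hP₂ind : P₂.index = P.index :=
      Subgroup.index_comap_of_surjective _ φ.surjective
    have hQ : IsPGroup q ↥(P ⊔ P₂) := hPgrp.to_sup_of_normal_right hP₂grp
    have e1 : P ⊔ P₂ ≤ P := aux_le_of_pgroup_sup hq le_sup_left hQ hPindex
    have e2 : P ⊔ P₂ ≤ P₂ := aux_le_of_pgroup_sup hq le_sup_right hQ (hP₂ind ▸ hPindex)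
    exact le_antisymm (le_trans le_sup_right e1) (le_trans le_sup_left e2)
  haveI := hPchar
  -- N centralizes P
  haveI : Nontrivial ↥P := by
    obtain ⟨x, hx, hx1⟩ := (Subgroup.nontrivial_iff_exists_ne_one N).mp inferInstance
    exact ⟨⟨⟨x, hNP hx⟩, 1, fun h => hx1 (by simpa using congrArg (Subgroup.subtype P) h)⟩⟩
  have hNcent : ∀ n ∈ N, n ∈ Subgroup.centralizer (P : Set G) := by
    have hZPchar : (Subgroup.centralizer (P : Set G) ⊓ P).Characteristic := by
      rw [Subgroup.characteristic_iff_comap_eq]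
      intro φ
      rw [Subgroup.comap_inf,
        (Subgroup.characteristic_iff_comap_eq.mp inferInstance) φ,
        (Subgroup.characteristic_iff_comap_eq.mp hPchar) φ]
    have hZPbot : Subgroup.centralizer (P : Set G) ⊓ P ≠ ⊥ := by
      haveI hcn : Nontrivial (Subgroup.center ↥P) := IsPGroup.center_nontrivial hPgrp
      obtain ⟨z, hzmem, hz1⟩ :=
        (Subgroup.nontrivial_iff_exists_ne_one (Subgroup.center ↥P)).mp hcn
      intro hbot
      have hzZP : (z : G) ∈ Subgroup.centralizer (P : Set G) ⊓ P := by
        refine ⟨?_, z.2⟩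
        intro p hp
        have := (Subgroup.mem_center_iff.mp hzmem) ⟨p, hp⟩
        exact congrArg (Subgroup.subtype P) this
      rw [hbot, Subgroup.mem_bot] at hzZP
      exact hz1 (Subtype.ext hzZP)
    intro n hn
    exact (huniq _ hZPchar hZPbot hn).1
  -- if N were central, G would be nilpotent
  have hNnotcentral : ¬ N ≤ Subgroup.center G := by
    intro hle
    apply hGnil
    apply @_root_.isNilpotent_of_ker_le_center _ _ _ _ π ?_ hnilq
    rw [hkerN]
    exact hle
  -- Schur-Zassenhaus complement of P
  obtain ⟨n0, hn0⟩ := IsPGroup.iff_card.mp hPgrp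
  have hPcoprime : Nat.Coprime (Nat.card ↥P) P.index := by
    rw [hn0]
    exact Nat.Coprime.pow_left n0 (((Nat.Prime.coprime_iff_not_dvd hq).mpr hPindex))
  obtain ⟨H, hH⟩ := Subgroup.exists_right_complement'_of_coprime hPcoprime
  have hcardH : P.index = Nat.card ↥H := hH.symm.index_eq_card
  have hqH : ¬ q ∣ Nat.card ↥H := hcardH ▸ hPindex
  -- commutators of P and H lie in N
  have hcomm : ∀ p ∈ P, ∀ h ∈ H, ⁅p, h⁆ ∈ N := by
    intro p hp h hh
    have hpi : ∃ i, orderOf (π p) = q ^ i := by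
      obtain ⟨k, hk⟩ := IsPGroup.iff_orderOf.mp hPgrp ⟨p, hp⟩
      rw [Subgroup.orderOf_mk] at hk
      have : orderOf (π p) ∣ q ^ k := hk ▸ orderOf_map_dvd π p
      obtain ⟨i, _, hi⟩ := (Nat.dvd_prime_pow hq).mp this
      exact ⟨i, hi⟩
    obtain ⟨i, hpi⟩ := hpi
    have hhq : ¬ q ∣ orderOf (π h) := by
      intro hdvd
      apply hqH
      calc q ∣ orderOf (π h) := hdvd
        _ ∣ orderOf h := orderOf_map_dvd π h
        _ ∣ Nat.card ↥H := by
            have := orderOf_dvd_natCard (⟨h, hh⟩ : ↥H)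
            rwa [Subgroup.orderOf_mk] at this
    have hco : Nat.Coprime (orderOf (π p)) (orderOf (π h)) := by
      rw [hpi]
      exact Nat.Coprime.pow_left i ((Nat.Prime.coprime_iff_not_dvd hq).mpr hhq)
    have hcmt : Commute (π p) (π h) := aux_commute_of_coprime_orderOf hnilq hco
    have : π ⁅p, h⁆ = 1 := by
      rw [map_commutatorElement]
      exact commutatorElement_eq_one_iff_commute.mpr hcmt
    rwa [hπ, QuotientGroup.mk'_apply, QuotientGroup.eq_one_iff] at this
  -- decompose arbitrary g ∈ G as p * h
  have hdecomp : ∀ g : G, ∃ p ∈ P, ∃ h ∈ H, g = p * h := by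
    intro g
    obtain ⟨⟨a, b⟩, hab, -⟩ := hH.existsUnique g
    exact ⟨a.1, a.2, b.1, b.2, hab.symm⟩
  -- P is abelian, via the three subgroups lemma
  have hPab : ∀ a b : ↥P, a * b = b * a := by
    have h1 : ⁅⁅P, H⁆, P⁆ = ⊥ := by
      rw [Subgroup.commutator_eq_bot_iff_le_centralizer]
      rw [Subgroup.commutator_le]
      intro g1 hg1 g2 hg2
      exact hNcent _ (hcomm g1 hg1 g2 hg2)
    have h2 : ⁅⁅H, P⁆, P⁆ = ⊥ := by
      rw [Subgroup.commutator_eq_bot_iff_le_centralizer]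
      rw [Subgroup.commutator_le]
      intro g1 hg1 g2 hg2
      refine hNcent _ ?_
      have : ⁅g2, g1⁆ ∈ N := hcomm g2 hg2 g1 hg1
      rw [← commutatorElement_inv]
      exact N.inv_mem this
    have h3 : ⁅⁅P, P⁆, H⁆ = ⊥ :=
      Subgroup.commutator_commutator_eq_bot_of_rotate h1 h2
    have hPP : ⁅P, P⁆ = ⊥ := by
      by_contra hPP
      haveI : (⁅P, P⁆).Characteristic := Subgroup.commutator_characteristic P P
      have hNle : N ≤ ⁅P, P⁆ := huniq _ inferInstance hPP
      apply hNnotcentral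
      intro n hn
      rw [Subgroup.mem_center_iff]
      intro g
      obtain ⟨p, hp, h, hh, rfl⟩ := hdecomp g
      have hnp : p * n = n * p := hNcent n hn p hp
      have hnh : h * n = n * h := by
        exact Subgroup.commutator_eq_bot_iff_le_centralizer.mp h3 (hNle hn) h hh
      rw [mul_assoc, hnh, ← mul_assoc, hnp, mul_assoc]
    intro a b
    have : ⁅(a : G), (b : G)⁆ ∈ (⊥ : Subgroup G) :=
      hPP ▸ Subgroup.commutator_mem_commutator a.2 b.2
    rw [Subgroup.mem_bot, commutatorElement_eq_one_iff_commute] at this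
    exact Subtype.ext this
  letI commP : CommGroup ↥P := { (inferInstance : Group ↥P) with mul_comm := hPab }
  -- center of G is trivial
  have hcenterbot : Subgroup.center G = ⊥ := by
    by_contra h
    exact hNnotcentral (huniq _ Subgroup.centerCharacteristic h)
  -- the averaging argument: P ≤ N
  have hPN : P ≤ N := by
    set NP : Subgroup ↥P := N.subgroupOf P with hNPdef
    haveI : NP.Normal := Subgroup.normal_subgroupOf
    set ρ : ↥P →* ↥P ⧸ NP := QuotientGroup.mk' NP with hρdef
    set conjP : ↥H → (↥P →* ↥P) := fun h =>
      { toFun := fun y => ⟨(h : G) * (y : G) * (h : G)⁻¹, hPnormal.conj_mem y.1 y.2 h.1⟩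
        map_one' := Subtype.ext (by simp)
        map_mul' := fun a b => Subtype.ext (by
          show (h : G) * ((a : G) * (b : G)) * (h : G)⁻¹ =
            ((h : G) * (a : G) * (h : G)⁻¹) * ((h : G) * (b : G) * (h : G)⁻¹)
          group) } with hconjPdef
    have hconjP_coe : ∀ (h : ↥H) (y : ↥P),
        ((conjP h y : ↥P) : G) = (h : G) * (y : G) * (h : G)⁻¹ := fun _ _ => rfl
    intro x hx
    set x' : ↥P := ⟨x, hx⟩ with hx'def
    set n : ℕ := Fintype.card ↥H with hndef
    set F : ↥P := ∏ h : ↥H, conjP h x' with hFdef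
    -- F is fixed by conjugation by H
    have hFconj : ∀ h0 : ↥H, conjP h0 F = F := by
      intro h0
      rw [hFdef, map_prod]
      have hcc : ∀ h : ↥H, conjP h0 (conjP h x') = conjP (h0 * h) x' := by
        intro h
        apply Subtype.ext
        rw [hconjP_coe, hconjP_coe, hconjP_coe]
        show (h0 : G) * ((h : G) * x * (h : G)⁻¹) * (h0 : G)⁻¹ =
          ((h0 : G) * (h : G)) * x * ((h0 : G) * (h : G))⁻¹
        group
      calc (∏ h : ↥H, conjP h0 (conjP h x')) = ∏ h : ↥H, conjP (h0 * h) x' := by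
            exact Finset.prod_congr rfl (fun h _ => hcc h)
        _ = ∏ h : ↥H, conjP h x' :=
            Fintype.prod_equiv (Equiv.mulLeft h0) _ _ (fun h => rfl)
    -- ρ F = (ρ x')^n
    have hρconst : ∀ h : ↥H, ρ (conjP h x') = ρ x' := by
      intro h
      have hmem : (conjP h x')⁻¹ * x' ∈ NP := by
        rw [hNPdef, Subgroup.mem_subgroupOf]
        have : ((conjP h x')⁻¹ * x' : ↥P) = ((h : G) * x * (h : G)⁻¹)⁻¹ * x := rfl
        rw [this]
        have hc : ⁅x⁻¹, (h : G)⁆ ∈ N := hcomm x⁻¹ (P.inv_mem hx) h h.2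
        have hc2 : ⁅(h : G), x⁻¹⁆ ∈ N := by
          rw [← commutatorElement_inv]
          exact N.inv_mem hc
        have : ((h : G) * x * (h : G)⁻¹)⁻¹ * x = ⁅(h : G), x⁻¹⁆ := by
          rw [commutatorElement_def]
          group
        rw [this]
        exact hc2
      exact QuotientGroup.eq.mpr hmem
    have hρF : ρ F = (ρ x') ^ n := by
      rw [hFdef, map_prod]
      rw [Finset.prod_congr rfl (fun h _ => hρconst h), Finset.prod_const,
        Finset.card_univ, hndef]
    -- choose an inverse of n modulo card P
    have hqn : ¬ q ∣ n := by
      rw [hndef, ← Nat.card_eq_fintype_card]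
      exact hqH
    have hco : Nat.Coprime n (Nat.card ↥P) := by
      rw [hn0]
      exact Nat.Coprime.pow_right n0 (((Nat.Prime.coprime_iff_not_dvd hq).mpr hqn).symm)
    have hone_lt : 1 < Nat.card ↥P := Finite.one_lt_card
    obtain ⟨m, -, hm⟩ := Nat.exists_mul_mod_eq_one_of_coprime hco hone_lt
    set z : ↥P := F ^ m with hzdef
    -- ρ z = ρ x'
    have hρz : ρ z = ρ x' := by
      have h1 : ρ z = (ρ x') ^ (n * m) := by
        rw [hzdef, map_pow, hρF, ← pow_mul]
      have h2 : (ρ x') ^ (Nat.card ↥P) = 1 := by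
        rw [← map_pow, pow_card_eq_one', map_one]
      have h3 : n * m = n * m % Nat.card ↥P + Nat.card ↥P * (n * m / Nat.card ↥P) :=
        (Nat.mod_add_div _ _).symm
      rw [h1, h3, pow_add, hm, pow_one, pow_mul, h2, one_pow, mul_one]
    have hw : z⁻¹ * x' ∈ NP := QuotientGroup.eq.mp hρz
    -- z is central in G
    have hzcen : (z : G) ∈ Subgroup.center G := by
      rw [Subgroup.mem_center_iff]
      intro g
      obtain ⟨p, hp, h, hh, rfl⟩ := hdecomp g
      have hzp : p * (z : G) = (z : G) * p := by
        have := hPab ⟨p, hp⟩ z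
        exact congrArg (Subgroup.subtype P) this
      have hzh : (h : G) * (z : G) = (z : G) * h := by
        have hfix : conjP ⟨h, hh⟩ z = z := by
          rw [hzdef, map_pow, hFconj]
        have := congrArg (Subgroup.subtype P) hfix
        rw [Subgroup.coe_subtype] at this
        rw [hconjP_coe] at this
        calc (h : G) * (z : G) = ((h : G) * z * (h : G)⁻¹) * h := by group
          _ = (z : G) * h := by rw [this]
      rw [mul_assoc, hzh, ← mul_assoc, hzp, mul_assoc]
    have hz1 : z = 1 := by
      rw [hcenterbot, Subgroup.mem_bot] at hzcen
      exact Subtype.ext hzcen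
    rw [hz1] at hw
    simp only [inv_one, one_mul] at hw
    exact Subgroup.mem_subgroupOf.mp hw
  -- conclude
  have hNPeq : N = P := le_antisymm hNP hPN
  refine ⟨q, hq, hxq, habN, hNp, ?_⟩
  rw [hNPeq]
  exact hPindex
end

section
/- Let G be a finite solvable group that is not nilpotent, with N = G^∞ the unique minimal characteristic subgroup of G. If n > 1 is the size of an orbit of the conjugation action of G/N on N, then the set of primes dividing n equals the set of primes dividing |G:N|. -/
open Subgroup

private lemma aux_cent_le_norm {G : Type*} [Group G] (S : Subgroup G) :
    centralizer (S : Set G) ≤ Subgroup.normalizer (S : Set G) := by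
  intro g hg
  rw [Subgroup.mem_centralizer_iff] at hg
  rw [Subgroup.mem_normalizer_iff]
  intro h
  constructor
  · intro hh; rw [← hg h hh]; group; exact hh
  · intro hh
    have h2 := hg _ hh
    have h3 : h = g * h * g⁻¹ := by
      apply mul_left_cancel (a := g)
      calc g * h = (g * h * g⁻¹) * g := by group
        _ = g * (g * h * g⁻¹) := h2
    rw [h3]; exact hh

private lemma aux_perfect_bot {G : Type*} [Group G] [Group.IsSolvable G] (H : Subgroup G)
    (h : ⁅H, H⁆ = H) : H = ⊥ := by
  obtain ⟨n, hn⟩ := Group.IsSolvable.solvable (G := G)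
  have key : ∀ m, H ≤ derivedSeries G m := by
    intro m
    induction m with
    | zero => exact le_top
    | succ m ih =>
      rw [derivedSeries_succ]
      calc H = ⁅H, H⁆ := h.symm
        _ ≤ _ := Subgroup.commutator_mono ih ih
  exact le_bot_iff.mp (hn ▸ key n)

private lemma aux_orbit_card {G : Type*} [Group G] [Fintype G] (x : G) :
    Nat.card (Set.range fun g : G => g * x * g⁻¹) = (Subgroup.centralizer {x}).index := by
  have horb : (Set.range fun g : G => g * x * g⁻¹) = MulAction.orbit (ConjAct G) x := by
    ext y
    constructor
    · rintro ⟨g, rfl⟩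
      exact ⟨ConjAct.toConjAct g, by simp [ConjAct.smul_def]⟩
    · rintro ⟨g, rfl⟩
      exact ⟨ConjAct.ofConjAct g, by simp [ConjAct.smul_def]⟩
  have h1 : Nat.card (MulAction.orbit (ConjAct G) x) *
      Nat.card (MulAction.stabilizer (ConjAct G) x) = Nat.card (ConjAct G) := by
    rw [← Nat.card_prod]
    exact Nat.card_congr (MulAction.orbitProdStabilizerEquivGroup (ConjAct G) x)
  have h2 : Nat.card (Subgroup.centralizer ({x} : Set G)) =
      Nat.card (MulAction.stabilizer (ConjAct G) x) := by
    rw [Subgroup.centralizer_eq_comap_stabilizer]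
    refine Nat.card_congr ⟨fun w => ⟨ConjAct.toConjAct w.1, w.2⟩,
      fun w => ⟨ConjAct.ofConjAct w.1, w.2⟩, ?_, ?_⟩ <;>
      intro w <;> rfl
  have h3 : Nat.card (ConjAct G) = Nat.card G := rfl
  have h4 := Subgroup.card_mul_index (Subgroup.centralizer ({x} : Set G))
  have hpos : 0 < Nat.card (MulAction.stabilizer (ConjAct G) x) := Nat.card_pos
  rw [horb]
  apply Nat.eq_of_mul_eq_mul_right hpos
  rw [h1, h3, ← h4, h2]
  ring

private lemma aux_conj_mem_centralizer {G : Type*} [Group G] {S : Subgroup G} {g h : G}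
    (hg : g ∈ Subgroup.normalizer (S : Set G)) (hh : h ∈ Subgroup.centralizer (S : Set G)) :
    g * h * g⁻¹ ∈ Subgroup.centralizer (S : Set G) := by
  rw [Subgroup.mem_centralizer_iff] at hh ⊢
  intro y hy
  have hy' : g⁻¹ * y * g ∈ S := by
    have := (Subgroup.mem_normalizer_iff.mp hg (g⁻¹ * y * g)).mpr
    apply this
    have he : g * (g⁻¹ * y * g) * g⁻¹ = y := by group
    rw [he]; exact hy
  calc y * (g * h * g⁻¹) = g * ((g⁻¹ * y * g) * h) * g⁻¹ := by group
    _ = g * (h * (g⁻¹ * y * g)) * g⁻¹ := by rw [hh _ hy']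
    _ = (g * h * g⁻¹) * y := by group

private lemma aux_normal_inf_cent {G : Type*} [Group G] {q : ℕ} (K A : Subgroup G) [hKn : K.Normal]
    (Q : Sylow q G) (hA : A ≤ Subgroup.centralizer (K : Set G))
    (hFr : Subgroup.normalizer ((Q : Subgroup G) : Set G) ⊔ A = ⊤) :
    (K ⊓ Subgroup.centralizer ((Q : Subgroup G) : Set G)).Normal := by
  rw [← Subgroup.normalizer_eq_top_iff, eq_top_iff, ← hFr, sup_le_iff]
  constructor
  · intro g hg
    rw [Subgroup.mem_normalizer_iff]
    intro h
    constructor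
    · rintro ⟨h1, h2⟩
      exact ⟨hKn.conj_mem h h1 g, aux_conj_mem_centralizer hg h2⟩
    · rintro ⟨h1, h2⟩
      have hg' : g⁻¹ ∈ Subgroup.normalizer ((Q : Subgroup G) : Set G) := Subgroup.inv_mem _ hg
      have k1 : h ∈ K := by
        have := hKn.conj_mem _ h1 g⁻¹
        simpa [mul_assoc] using this
      have k2 : h ∈ Subgroup.centralizer ((Q : Subgroup G) : Set G) := by
        have := aux_conj_mem_centralizer hg' h2
        have he : g⁻¹ * (g * h * g⁻¹) * g⁻¹⁻¹ = h := by group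
        rwa [he] at this
      exact ⟨k1, k2⟩
  · intro a ha
    have hacent := hA ha
    rw [Subgroup.mem_centralizer_iff] at hacent
    rw [Subgroup.mem_normalizer_iff]
    intro h
    have key : ∀ k ∈ K, a * k * a⁻¹ = k := by
      intro k hk
      have := hacent k hk
      rw [← this]; group
    constructor
    · rintro ⟨h1, h2⟩
      rw [key h h1]; exact ⟨h1, h2⟩
    · rintro ⟨h1, h2⟩
      have hh1 : h ∈ K := by
        have := hKn.conj_mem _ h1 a⁻¹
        simpa [mul_assoc] using this
      rw [key h hh1] at h2
      exact ⟨hh1, h2⟩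

private lemma aux_comap_centralizer {G : Type*} [Group G] (φ : G ≃* G) (S : Subgroup G) :
    Subgroup.comap φ.toMonoidHom (Subgroup.centralizer (S : Set G)) =
      Subgroup.centralizer ((Subgroup.comap φ.toMonoidHom S : Subgroup G) : Set G) := by
  ext z
  simp only [Subgroup.mem_comap, Subgroup.mem_centralizer_iff, SetLike.mem_coe]
  constructor
  · intro h w hw
    apply φ.injective
    simpa [map_mul] using h (φ w) hw
  · intro h y hy
    have := h (φ.symm y) (by simpa using hy)
    simpa [map_mul] using congrArg φ this

private lemma aux_char_inf_cent {G : Type*} [Group G] [Fintype G] {q : ℕ} [Fact q.Prime]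
    (K : Subgroup G) [hKc : K.Characteristic] [hKn : K.Normal] (Q : Sylow q G)
    (hnorm : (K ⊓ Subgroup.centralizer ((Q : Subgroup G) : Set G)).Normal) :
    (K ⊓ Subgroup.centralizer ((Q : Subgroup G) : Set G)).Characteristic := by
  rw [Subgroup.characteristic_iff_comap_eq]
  intro φ
  have hKeq : Subgroup.comap φ.toMonoidHom K = K :=
    Subgroup.characteristic_iff_comap_eq.mp hKc φ
  have hcard : Nat.card (Subgroup.comap φ.toMonoidHom (Q : Subgroup G)) =
      q ^ (Nat.card G).factorization q := by
    rw [← Q.card_eq_multiplicity]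
    refine Nat.card_congr ⟨fun w => ⟨φ w.1, w.2⟩, fun y => ⟨φ.symm y.1, by
      rw [Subgroup.mem_comap]; simpa using y.2⟩, ?_, ?_⟩
    · intro w; ext; simp
    · intro w; ext; simp
  obtain ⟨g, hg⟩ := MulAction.exists_smul_eq G Q (Sylow.ofCard _ hcard)
  have hmem : ∀ z : G, z ∈ Subgroup.comap φ.toMonoidHom (Q : Subgroup G) ↔
      g⁻¹ * z * g ∈ (Q : Subgroup G) := by
    intro z
    have h0 : (Sylow.ofCard (Subgroup.comap φ.toMonoidHom (Q : Subgroup G)) hcard : Subgroup G)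
        = Subgroup.comap φ.toMonoidHom (Q : Subgroup G) := rfl
    rw [← h0, ← hg, Sylow.smul_def, Sylow.pointwise_smul_def,
      Subgroup.mem_pointwise_smul_iff_inv_smul_mem]
    simp [MulAut.smul_def, MulAut.conj_inv_apply]
  rw [Subgroup.comap_inf, hKeq, aux_comap_centralizer]
  ext z
  simp only [Subgroup.mem_inf]
  have hcent : z ∈ Subgroup.centralizer
        ((Subgroup.comap φ.toMonoidHom (Q : Subgroup G) : Subgroup G) : Set G)
      ↔ g⁻¹ * z * g ∈ Subgroup.centralizer ((Q : Subgroup G) : Set G) := by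
    rw [Subgroup.mem_centralizer_iff, Subgroup.mem_centralizer_iff]
    constructor
    · intro h v hv
      have hv' : g * v * g⁻¹ ∈ Subgroup.comap φ.toMonoidHom (Q : Subgroup G) := by
        rw [hmem]
        have he : g⁻¹ * (g * v * g⁻¹) * g = v := by group
        rw [he]; exact hv
      have hc := h _ hv'
      calc v * (g⁻¹ * z * g) = g⁻¹ * ((g * v * g⁻¹) * z) * g := by group
        _ = g⁻¹ * (z * (g * v * g⁻¹)) * g := by rw [hc]
        _ = (g⁻¹ * z * g) * v := by group
    · intro h w hw
      have hv := h _ ((hmem w).mp hw)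
      calc w * z = g * ((g⁻¹ * w * g) * (g⁻¹ * z * g)) * g⁻¹ := by group
        _ = g * ((g⁻¹ * z * g) * (g⁻¹ * w * g)) * g⁻¹ := by rw [hv]
        _ = z * w := by group
  rw [hcent]
  constructor
  · rintro ⟨h1, h2⟩
    have hmem2 : g⁻¹ * z * g ∈ K := by
      have := hKn.conj_mem z h1 g⁻¹
      simpa [mul_assoc] using this
    have hc := hnorm.conj_mem _ (Subgroup.mem_inf.mpr ⟨hmem2, h2⟩) g
    have he : g * (g⁻¹ * z * g) * g⁻¹ = z := by group
    rw [he] at hc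
    exact Subgroup.mem_inf.mp hc
  · rintro ⟨h1, h2⟩
    refine ⟨h1, ?_⟩
    have hc := hnorm.conj_mem z (Subgroup.mem_inf.mpr ⟨h1, h2⟩) g⁻¹
    have hc2 : g⁻¹ * z * g ∈ K ⊓ Subgroup.centralizer ((Q : Subgroup G) : Set G) := by
      simpa [mul_assoc] using hc
    exact (Subgroup.mem_inf.mp hc2).2

/-- If `G` is a finite solvable non-nilpotent group, `N = G^∞` is the unique minimal
characteristic subgroup of `G`, and `n > 1` is the size of a conjugation orbit of `G` on `N`,
then the primes dividing `n` are exactly the primes dividing `|G:N|`. -/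
theorem stmt_2 {G : Type*} [Group G] [Fintype G] [Group.IsSolvable G]
    (hGnil : ¬ Group.IsNilpotent G)
    (N : Subgroup G) [N.Normal]
    (hnilq : Group.IsNilpotent (G ⧸ N))
    (hmin : ∀ (M : Subgroup G) [M.Normal], Group.IsNilpotent (G ⧸ M) → N ≤ M)
    (hNbot : N ≠ ⊥)
    (huniq : ∀ H : Subgroup G, H.Characteristic → H ≠ ⊥ → N ≤ H)
    (x : G) (hx : x ∈ N) (n : ℕ)
    (hn : n = Nat.card (Set.range fun g : G => g * x * g⁻¹))
    (hn1 : 1 < n) :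
    n.primeFactors = N.index.primeFactors := by
  classical
  have hxne : x ≠ 1 := by
    rintro rfl
    have h1 : (Set.range fun g : G => g * (1:G) * g⁻¹) = {(1:G)} := by
      ext y; simp
    rw [h1, Nat.card_unique] at hn
    omega
  have hnC : n = (Subgroup.centralizer ({x} : Set G)).index := by
    rw [hn, aux_orbit_card]
  -- N is characteristic
  have hNcomap : ∀ φ : G ≃* G, Subgroup.comap φ.toMonoidHom N = N := by
    have h1 : ∀ ψ : G ≃* G, N ≤ Subgroup.comap ψ.toMonoidHom N := by
      intro ψ
      haveI : (Subgroup.comap ψ.toMonoidHom N).Normal :=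
        Subgroup.Normal.comap ‹N.Normal› ψ.toMonoidHom
      refine hmin _ ?_
      have e : (G ⧸ Subgroup.comap ψ.toMonoidHom N) ≃* (G ⧸ N) :=
        QuotientGroup.congr _ _ ψ (map_comap_eq_self_of_surjective ψ.surjective N)
      exact nilpotent_of_mulEquiv e.symm
    intro φ
    refine le_antisymm (fun g hg => ?_) (h1 φ)
    have := h1 φ.symm (Subgroup.mem_comap.mp hg)
    simpa using this
  haveI hNchar : N.Characteristic := Subgroup.characteristic_iff_comap_eq.mpr hNcomap
  -- N is abelian
  have hNN : ⁅N, N⁆ = ⊥ := by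
    by_contra hc
    have hle : ⁅N, N⁆ ≤ N := commutator_le_left N N
    have heq : ⁅N, N⁆ = N :=
      le_antisymm hle (huniq _ (Subgroup.commutator_characteristic N N) hc)
    exact hNbot (aux_perfect_bot N heq)
  have habelN : N ≤ Subgroup.centralizer (N : Set G) :=
    commutator_eq_bot_iff_le_centralizer.mp hNN
  have hcommN : ∀ a ∈ N, ∀ b ∈ N, a * b = b * a := fun a ha b hb =>
    Subgroup.mem_centralizer_iff.mp (habelN hb) a ha
  -- the prime p with N elementary abelian p-group
  have hNcard1 : 1 < Nat.card N := (Subgroup.one_lt_card_iff_ne_bot N).mpr hNbot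
  obtain ⟨p, hp, hpdvd⟩ := Nat.exists_prime_and_dvd (n := Nat.card N) (by omega)
  haveI hpF : Fact p.Prime := ⟨hp⟩
  have hTdef : ∃ T : Subgroup G, (∀ g : G, g ∈ T ↔ g ∈ N ∧ g ^ p = 1) := by
    refine ⟨{ carrier := {g | g ∈ N ∧ g ^ p = 1}
              one_mem' := ⟨N.one_mem, one_pow p⟩
              mul_mem' := ?_
              inv_mem' := ?_ }, fun g => Iff.rfl⟩
    · rintro a b ⟨haN, hap⟩ ⟨hbN, hbp⟩
      refine ⟨N.mul_mem haN hbN, ?_⟩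
      have hc : Commute a b := hcommN a haN b hbN
      rw [hc.mul_pow, hap, hbp, one_mul]
    · rintro a ⟨haN, hap⟩
      exact ⟨N.inv_mem haN, by rw [inv_pow, hap, inv_one]⟩
  obtain ⟨T, hTmem⟩ := hTdef
  have hTchar : T.Characteristic := by
    rw [Subgroup.characteristic_iff_comap_eq]
    intro φ
    ext g
    rw [Subgroup.mem_comap]
    simp only [MulEquiv.coe_toMonoidHom]
    rw [hTmem, hTmem]
    have h1 : φ g ∈ N ↔ g ∈ N := by
      constructor
      · intro h
        have h' : g ∈ Subgroup.comap φ.toMonoidHom N := h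
        rwa [hNcomap φ] at h'
      · intro h
        have h' : g ∈ Subgroup.comap φ.toMonoidHom N := by rw [hNcomap φ]; exact h
        exact h'
    have h2 : φ g ^ p = 1 ↔ g ^ p = 1 := by
      rw [← map_pow]
      exact ⟨fun h => by simpa using congrArg φ.symm h, fun h => by rw [h, map_one]⟩
    rw [h1, h2]
  have hTne : T ≠ ⊥ := by
    obtain ⟨a, ha⟩ := exists_prime_orderOf_dvd_card (G := N) p
      (by rwa [← Nat.card_eq_fintype_card])
    intro hbot
    have hap : (a : G) ^ p = 1 := by
      have h := pow_orderOf_eq_one a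
      rw [ha] at h
      exact_mod_cast congrArg (fun z : N => (z : G)) h
    have haT : (a : G) ∈ T := (hTmem _).mpr ⟨a.2, hap⟩
    rw [hbot, Subgroup.mem_bot] at haT
    have : a = 1 := by ext; simpa using haT
    rw [this, orderOf_one] at ha
    exact hp.one_lt.ne' ha.symm
  have hNT := huniq T hTchar hTne
  have hpow : ∀ g ∈ N, g ^ p = 1 := fun g hg => ((hTmem g).mp (hNT hg)).2
  have hNp : IsPGroup p N := fun a => ⟨1, by
    rw [pow_one]
    exact Subtype.ext (by simpa using hpow (a : G) a.2)⟩
  -- quotient setup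
  have hsurj : Function.Surjective (QuotientGroup.mk' N) := QuotientGroup.mk'_surjective N
  have hSylN : ∀ (r : ℕ) (_ : Fact r.Prime) (S : Sylow r (G ⧸ N)),
      (S : Subgroup (G ⧸ N)).Normal := by
    have h03 := (isNilpotent_of_finite_tfae (G := G ⧸ N)).out 0 3
    exact fun r hr S => (h03.mp hnilq) r hr S
  have hFrattini : ∀ (r : ℕ) (_ : Fact r.Prime) (R : Sylow r G),
      Subgroup.normalizer ((R : Subgroup G) : Set G) ⊔ N = ⊤ := by
    intro r hr R
    haveI := hr
    have hR' := hSylN r hr (Sylow.mapSurjective hsurj R)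
    have hM : Subgroup.comap (QuotientGroup.mk' N)
        (Sylow.mapSurjective hsurj R : Subgroup (G ⧸ N)) = (R : Subgroup G) ⊔ N := by
      rw [Sylow.coe_mapSurjective, comap_map_eq]
      congr 1
      exact QuotientGroup.ker_mk' N
    haveI hMn : ((R : Subgroup G) ⊔ N).Normal := hM ▸ Subgroup.Normal.comap hR' _
    have h2 := Sylow.normalizer_sup_eq_top' (N := (R : Subgroup G) ⊔ N) R le_sup_left
    rwa [← Sylow.coe_coe, ← sup_assoc, sup_eq_left.mpr Subgroup.le_normalizer] at h2
  -- the key vanishing of centralizers in N of q-Sylows, q ≠ p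
  have hD : ∀ (q : ℕ), q.Prime → q ≠ p → ∀ Q : Sylow q G, (Q : Subgroup G) ≠ ⊥ →
      N ⊓ Subgroup.centralizer ((Q : Subgroup G) : Set G) = ⊥ := by
    intro q hq hqp Q hQbot
    haveI : Fact q.Prime := ⟨hq⟩
    have hFr := hFrattini q ⟨hq⟩ Q
    have hdisj : Disjoint (Q : Subgroup G) N := IsPGroup.disjoint_of_ne q p hqp _ _ Q.2 hNp
    have hnorm := aux_normal_inf_cent N N Q habelN hFr
    by_contra hne
    have hNle := huniq _ (aux_char_inf_cent N Q hnorm) hne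
    have hNcent : N ≤ Subgroup.centralizer ((Q : Subgroup G) : Set G) :=
      hNle.trans inf_le_right
    have hQnormal : (Q : Subgroup G).Normal := by
      rw [← Subgroup.normalizer_eq_top_iff, eq_top_iff, ← hFr, sup_le_iff]
      exact ⟨le_rfl, hNcent.trans (aux_cent_le_norm _)⟩
    have hQchar := Sylow.characteristic_of_normal Q hQnormal
    have hNQ := huniq _ hQchar hQbot
    exact hNbot (le_bot_iff.mp ((le_inf hNQ le_rfl).trans hdisj.le_bot))
  -- p does not divide the index of N
  have hpind : ¬ p ∣ N.index := by
    intro hpdvdind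
    obtain ⟨P, hNP⟩ := hNp.exists_le_sylow
    have hPbar := hSylN p hpF (Sylow.mapSurjective hsurj P)
    have hPN : Subgroup.comap (QuotientGroup.mk' N)
        (Sylow.mapSurjective hsurj P : Subgroup (G ⧸ N)) = (P : Subgroup G) := by
      rw [Sylow.coe_mapSurjective, comap_map_eq, QuotientGroup.ker_mk']
      exact sup_eq_left.mpr hNP
    haveI hPnormal : (P : Subgroup G).Normal := hPN ▸ Subgroup.Normal.comap hPbar _
    haveI hPchar : (P : Subgroup G).Characteristic :=
      Sylow.characteristic_of_normal P hPnormal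
    have hCPchar : (N ⊓ Subgroup.centralizer ((P : Subgroup G) : Set G)).Characteristic := by
      rw [Subgroup.characteristic_iff_comap_eq]
      intro φ
      rw [Subgroup.comap_inf, hNcomap φ, aux_comap_centralizer,
        Subgroup.characteristic_iff_comap_eq.mp hPchar φ]
    letI : MulAction (P : Subgroup G) N :=
      MulAction.compHom _ ((MulAut.conjNormal (H := N)).comp (P : Subgroup G).subtype)
    have hfix : ∀ (g : (P : Subgroup G)) (a : N), g • a = MulAut.conjNormal (g : G) a :=
      fun g a => rfl
    have hmod := (P.2).card_modEq_card_fixedPoints (p := p) N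
    have hfix1 : (1 : N) ∈ MulAction.fixedPoints (P : Subgroup G) N := by
      intro g
      rw [hfix, map_one]
    have hfixpos : Nat.card (MulAction.fixedPoints (P : Subgroup G) N) ≠ 0 := by
      haveI : Nonempty (MulAction.fixedPoints (P : Subgroup G) N) := ⟨⟨1, hfix1⟩⟩
      exact Nat.card_pos.ne'
    have hpfix : p ∣ Nat.card (MulAction.fixedPoints (P : Subgroup G) N) := by
      have h0 : Nat.card N ≡ 0 [MOD p] := (Nat.modEq_zero_iff_dvd).mpr hpdvd
      exact (Nat.modEq_zero_iff_dvd).mp (hmod.symm.trans h0)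
    have h1lt : 1 < Nat.card (MulAction.fixedPoints (P : Subgroup G) N) := by
      have hge := Nat.le_of_dvd (Nat.pos_of_ne_zero hfixpos) hpfix
      have := hp.two_le
      omega
    haveI hnt : Nontrivial (MulAction.fixedPoints (P : Subgroup G) N) :=
      Finite.one_lt_card_iff_nontrivial.mp h1lt
    obtain ⟨b, hbne⟩ := exists_ne (α := MulAction.fixedPoints (P : Subgroup G) N) ⟨1, hfix1⟩
    have hbG : ((b : N) : G) ≠ 1 := by
      intro h
      apply hbne
      ext
      simpa using h
    have hCPne : N ⊓ Subgroup.centralizer ((P : Subgroup G) : Set G) ≠ ⊥ := by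
      intro hbot
      apply hbG
      have hmem : ((b : N) : G) ∈ N ⊓ Subgroup.centralizer ((P : Subgroup G) : Set G) := by
        refine Subgroup.mem_inf.mpr ⟨(b : N).2, ?_⟩
        rw [Subgroup.mem_centralizer_iff]
        intro y hy
        have hb2 := b.2 ⟨y, hy⟩
        have hval := congrArg (fun z : N => (z : G)) hb2
        rw [hfix] at hval
        simp only [MulAut.conjNormal_apply] at hval
        calc y * ((b : N) : G) = (y * ((b : N) : G) * y⁻¹) * y := by group
          _ = ((b : N) : G) * y := by rw [hval]
      rw [hbot] at hmem
      simpa using hmem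
    have hNcentP : N ≤ Subgroup.centralizer ((P : Subgroup G) : Set G) :=
      (huniq _ hCPchar hCPne).trans inf_le_right
    -- a prime q ≠ p dividing |G|
    obtain ⟨q, hq, hqG, hqp⟩ : ∃ q : ℕ, q.Prime ∧ q ∣ Nat.card G ∧ q ≠ p := by
      by_contra hcon
      push_neg at hcon
      have hcardG : Nat.card G ≠ 0 := Nat.card_pos.ne'
      have hcard : Nat.card G = p ^ (Nat.card G).primeFactorsList.length :=
        Nat.eq_prime_pow_of_unique_prime_dvd hcardG (fun {d} hd hdvd => hcon d hd hdvd)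
      exact hGnil ((IsPGroup.of_card hcard).isNilpotent)
    haveI : Fact q.Prime := ⟨hq⟩
    obtain ⟨Q⟩ := (inferInstance : Nonempty (Sylow q G))
    have hQbot : (Q : Subgroup G) ≠ ⊥ := by
      intro hbot
      have hcardQ := Q.card_eq_multiplicity
      rw [hbot] at hcardQ
      have hone : (1 : ℕ) = q ^ (Nat.card G).factorization q := by
        simpa using hcardQ
      have hk := hq.factorization_pos_of_dvd Nat.card_pos.ne' hqG
      have := Nat.one_lt_pow hk.ne' hq.one_lt
      omega
    have hCQ := hD q hq hqp Q hQbot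
    -- commutators of P and Q lie in N
    have hPQ : ∀ u ∈ (P : Subgroup G), ∀ g ∈ (Q : Subgroup G),
        u⁻¹ * g * u * g⁻¹ ∈ N := by
      intro u hu g hg
      have hPb : (QuotientGroup.mk' N) u ∈
          (Sylow.mapSurjective hsurj P : Subgroup (G ⧸ N)) := by
        rw [Sylow.coe_mapSurjective]; exact ⟨u, hu, rfl⟩
      have hQb : (QuotientGroup.mk' N) g ∈
          (Sylow.mapSurjective hsurj Q : Subgroup (G ⧸ N)) := by
        rw [Sylow.coe_mapSurjective]; exact ⟨g, hg, rfl⟩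
      have hdisjb : Disjoint ((Sylow.mapSurjective hsurj P : Subgroup (G ⧸ N)))
          ((Sylow.mapSurjective hsurj Q : Subgroup (G ⧸ N))) :=
        IsPGroup.disjoint_of_ne p q (Ne.symm hqp) _ _
          (Sylow.mapSurjective hsurj P).2 (Sylow.mapSurjective hsurj Q).2
      have hcomm : Commute ((QuotientGroup.mk' N) u) ((QuotientGroup.mk' N) g) :=
        Subgroup.commute_of_normal_of_disjoint _ _ (hSylN p hpF _) (hSylN q ⟨hq⟩ _)
          hdisjb _ _ hPb hQb
      have hone : (QuotientGroup.mk' N) (u⁻¹ * g * u * g⁻¹) = 1 := by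
        rw [map_mul, map_mul, map_mul, map_inv, map_inv]
        set a := (QuotientGroup.mk' N) u
        set c := (QuotientGroup.mk' N) g
        calc a⁻¹ * c * a * c⁻¹ = a⁻¹ * (c * a) * c⁻¹ := by group
          _ = a⁻¹ * (a * c) * c⁻¹ := by rw [← hcomm.eq]
          _ = 1 := by group
      have : u⁻¹ * g * u * g⁻¹ ∈ (QuotientGroup.mk' N).ker := hone
      rwa [QuotientGroup.ker_mk'] at this
    -- a p-element outside N
    obtain ⟨u, hu, huN⟩ : ∃ u, u ∈ (P : Subgroup G) ∧ u ∉ N := by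
      by_contra hcon
      push_neg at hcon
      have hPeq : (P : Subgroup G) = N := le_antisymm hcon hNP
      have := P.not_dvd_index
      rw [hPeq] at this
      exact this hpdvdind
    have hPQbot : (P : Subgroup G) ⊓
        Subgroup.centralizer ((Q : Subgroup G) : Set G) = ⊥ := by
      have hnorm2 := aux_normal_inf_cent (P : Subgroup G) N Q hNcentP (hFrattini q ⟨hq⟩ Q)
      by_contra hne
      have hle := huniq _ (aux_char_inf_cent (P : Subgroup G) Q hnorm2) hne
      have hNcQ : N ≤ Subgroup.centralizer ((Q : Subgroup G) : Set G) :=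
        hle.trans inf_le_right
      have : N = ⊥ := by rw [← hCQ]; exact le_antisymm (le_inf le_rfl hNcQ) inf_le_left
      exact hNbot this
    -- Q acts on the coset u N
    letI actQ : MulAction (Q : Subgroup G) {v : G // u⁻¹ * v ∈ N} :=
      { smul := fun g v => ⟨(g : G) * v * (g : G)⁻¹, by
          have h1 : u⁻¹ * ((g : G) * v * (g : G)⁻¹) =
              (u⁻¹ * (g : G) * u * (g : G)⁻¹) * ((g : G) * (u⁻¹ * (v : G)) * (g : G)⁻¹) := by
            group
          rw [h1]
          exact N.mul_mem (hPQ u hu (g : G) g.2) (‹N.Normal›.conj_mem _ v.2 _)⟩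
        one_smul := fun v => by
          apply Subtype.ext
          show ((1 : (Q : Subgroup G)) : G) * v * ((1 : (Q : Subgroup G)) : G)⁻¹ = v
          simp
        mul_smul := fun g h v => by
          apply Subtype.ext
          show ((g * h : (Q : Subgroup G)) : G) * v * ((g * h : (Q : Subgroup G)) : G)⁻¹ =
            (g : G) * ((h : G) * v * (h : G)⁻¹) * (g : G)⁻¹
          push_cast
          group }
    have hcardT : Nat.card {v : G // u⁻¹ * v ∈ N} = Nat.card N := by
      refine Nat.card_congr ⟨fun v => ⟨u⁻¹ * v.1, v.2⟩,
        fun m => ⟨u * m.1, by simpa [mul_assoc] using m.2⟩, ?_, ?_⟩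
      · intro v; apply Subtype.ext; show u * (u⁻¹ * v.1) = v.1; group
      · intro m; apply Subtype.ext; show u⁻¹ * (u * m.1) = m.1; group
    have hqN : ¬ q ∣ Nat.card N := by
      obtain ⟨k, hk⟩ := (IsPGroup.iff_card).mp hNp
      rw [hk]
      intro hdvd
      exact hqp ((Nat.prime_dvd_prime_iff_eq hq hp).mp (hq.dvd_of_dvd_pow hdvd))
    have hmodT := (Q.2).card_modEq_card_fixedPoints (p := q) {v : G // u⁻¹ * v ∈ N}
    have hfixTne : Nat.card
        (MulAction.fixedPoints (Q : Subgroup G) {v : G // u⁻¹ * v ∈ N}) ≠ 0 := by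
      intro h0
      rw [h0] at hmodT
      have := (Nat.modEq_zero_iff_dvd).mp hmodT
      rw [hcardT] at this
      exact hqN this
    haveI : Nonempty
        (MulAction.fixedPoints (Q : Subgroup G) {v : G // u⁻¹ * v ∈ N}) := by
      rcases Nat.card_ne_zero.mp hfixTne with ⟨h, -⟩
      exact h
    obtain ⟨⟨v, hvfix⟩⟩ := ‹Nonempty (MulAction.fixedPoints (Q : Subgroup G)
      {v : G // u⁻¹ * v ∈ N})›
    have hvP : (v : G) ∈ (P : Subgroup G) := by
      have he : (v : G) = u * (u⁻¹ * v) := by group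
      rw [he]
      exact Subgroup.mul_mem _ hu (hNP v.2)
    have hvC : (v : G) ∈ Subgroup.centralizer ((Q : Subgroup G) : Set G) := by
      rw [Subgroup.mem_centralizer_iff]
      intro y hy
      have hfixed := hvfix ⟨y, hy⟩
      have hval := congrArg Subtype.val hfixed
      have hval' : y * (v : G) * y⁻¹ = (v : G) := hval
      calc y * (v : G) = (y * (v : G) * y⁻¹) * y := by group
        _ = (v : G) * y := by rw [hval']
    have hv1 : (v : G) = 1 := by
      have hmem : (v : G) ∈ (P : Subgroup G) ⊓
          Subgroup.centralizer ((Q : Subgroup G) : Set G) := ⟨hvP, hvC⟩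
      rw [hPQbot] at hmem
      simpa using hmem
    apply huN
    have hv2 := v.2
    rw [hv1, mul_one] at hv2
    exact (Subgroup.inv_mem_iff N).mp hv2
  -- final assembly
  have hNC : N ≤ Subgroup.centralizer ({x} : Set G) := by
    intro g hg
    rw [Subgroup.mem_centralizer_iff]
    intro y hy
    rw [Set.mem_singleton_iff] at hy
    subst hy
    exact hcommN y hx g hg
  have hdvdCN : (Subgroup.centralizer ({x} : Set G)).index ∣ N.index :=
    Subgroup.index_dvd_of_le hNC
  have hindne : N.index ≠ 0 := Subgroup.index_ne_zero_of_finite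
  ext q
  simp only [Nat.mem_primeFactors]
  constructor
  · rintro ⟨hq, hqn, -⟩
    refine ⟨hq, ?_, hindne⟩
    rw [hnC] at hqn
    exact hqn.trans hdvdCN
  · rintro ⟨hq, hqind, -⟩
    refine ⟨hq, ?_, by omega⟩
    by_contra hqn
    haveI : Fact q.Prime := ⟨hq⟩
    rcases eq_or_ne q p with rfl | hqp
    · exact hpind hqind
    · have hqG : q ∣ Nat.card G := hqind.trans (Subgroup.index_dvd_card N)
      have hCcard0 : Nat.card (Subgroup.centralizer ({x} : Set G)) ≠ 0 := Nat.card_pos.ne'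
      have hCind0 : (Subgroup.centralizer ({x} : Set G)).index ≠ 0 :=
        Subgroup.index_ne_zero_of_finite
      have hqnC : ¬ q ∣ (Subgroup.centralizer ({x} : Set G)).index := by rwa [← hnC]
      obtain ⟨R⟩ := (inferInstance : Nonempty (Sylow q (Subgroup.centralizer ({x} : Set G))))
      have hcardQsub : Nat.card (Subgroup.map (Subgroup.centralizer ({x} : Set G)).subtype
          (R : Subgroup (Subgroup.centralizer ({x} : Set G)))) =
          q ^ (Nat.card G).factorization q := by
        have h1 := Nat.card_congr (Subgroup.equivMapOfInjective
          (R : Subgroup (Subgroup.centralizer ({x} : Set G)))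
          (Subgroup.centralizer ({x} : Set G)).subtype
          (Subgroup.subtype_injective _)).toEquiv
        rw [← h1, R.card_eq_multiplicity]
        congr 1
        rw [← Subgroup.card_mul_index (Subgroup.centralizer ({x} : Set G)),
          Nat.factorization_mul hCcard0 hCind0]
        simp [Nat.factorization_eq_zero_of_not_dvd hqnC]
      have hxQ : x ∈ N ⊓ Subgroup.centralizer
          (((Sylow.ofCard _ hcardQsub : Sylow q G) : Subgroup G) : Set G) := by
        refine Subgroup.mem_inf.mpr ⟨hx, ?_⟩
        rw [Subgroup.mem_centralizer_iff]
        intro y hy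
        have hyC : y ∈ Subgroup.centralizer ({x} : Set G) := by
          rcases hy with ⟨w, hw, rfl⟩
          exact w.2
        have := Subgroup.mem_centralizer_iff.mp hyC x (Set.mem_singleton x)
        exact this.symm
      have hQbot : ((Sylow.ofCard _ hcardQsub : Sylow q G) : Subgroup G) ≠ ⊥ := by
        intro hbot
        have hcardQ := (Sylow.ofCard _ hcardQsub : Sylow q G).card_eq_multiplicity
        rw [hbot] at hcardQ
        have hone : (1 : ℕ) = q ^ (Nat.card G).factorization q := by simpa using hcardQ
        have hk := hq.factorization_pos_of_dvd Nat.card_pos.ne' hqG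
        have := Nat.one_lt_pow hk.ne' hq.one_lt
        omega
      rw [hD q hq hqp _ hQbot] at hxQ
      simp only [Subgroup.mem_bot] at hxQ
      exact hxne hxQ
end

section
/- Let Γ be a finite solvable group and G ⊴ Γ a nonabelian normal subgroup with G′ ⊆ O^p(G) for all primes p. Let K ⊴ Γ be maximal subject to K ⊆ G and G/K nonabelian, and set N/K = (G/K)′. Then N/K = (G/K)^∞ and N/K is the unique minimal characteristic subgroup of G/K. -/
lemma pi_pgroup {p : ℕ} (hp : p.Prime) {ι : Type*} [Finite ι] (Gs : ι → Type*)
    [∀ i, Group (Gs i)] (h : ∀ i, IsPGroup p (Gs i)) : IsPGroup p (∀ i, Gs i) := by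
  cases nonempty_fintype ι
  intro g
  choose k hk using fun i => h i (g i)
  refine ⟨Finset.univ.sup k, ?_⟩
  funext i
  have : (g i) ^ p ^ Finset.univ.sup k = 1 := by
    have hdvd : p ^ k i ∣ p ^ Finset.univ.sup k :=
      pow_dvd_pow p (Finset.le_sup (Finset.mem_univ i))
    obtain ⟨c, hc⟩ := hdvd
    rw [hc, pow_mul, hk i, one_pow]
  simpa using this

lemma comm_bot_of_nilpotent {R : Type*} [Group R] [Finite R]
    (hp : ∀ p : ℕ, p.Prime → ∀ (T : Subgroup R) [T.Normal], IsPGroup p (R ⧸ T) → commutator R ≤ T)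
    (hn : Group.IsNilpotent R) : commutator R = ⊥ := by
  obtain ⟨e⟩ := ((isNilpotent_of_finite_tfae (G := R)).out 0 4).mp hn
  rw [eq_bot_iff]
  intro x hx
  have key : ∀ p : (Nat.card R).primeFactors, e.symm x p = 1 := by
    intro p
    haveI : Fact (Nat.Prime (p : ℕ)) := ⟨Nat.prime_of_mem_primeFactors p.2⟩
    let f : R →* ∀ P : Sylow p R, (P : Subgroup R) :=
      (Pi.evalMonoidHom _ p).comp e.symm.toMonoidHom
    have hpg : IsPGroup (p : ℕ) (∀ P : Sylow p R, (P : Subgroup R)) :=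
      pi_pgroup (Nat.prime_of_mem_primeFactors p.2) _ fun P => P.isPGroup'
    have hker : commutator R ≤ f.ker := by
      refine hp p (Nat.prime_of_mem_primeFactors p.2) f.ker ?_
      exact (hpg.of_injective (QuotientGroup.kerLift f) (QuotientGroup.kerLift_injective f))
    have : f x = 1 := hker hx
    simpa [f] using this
  have : e.symm x = 1 := funext key
  have := congrArg e this
  simpa using this

lemma commutator_map_surj {A B : Type*} [Group A] [Group B] (f : A →* B)
    (hf : Function.Surjective f) : (commutator A).map f = commutator B := by
  have htop : Subgroup.map f ⊤ = ⊤ := by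
    rw [← MonoidHom.range_eq_map]
    exact MonoidHom.range_eq_top.2 hf
  rw [commutator, commutator, Subgroup.map_commutator, htop]

lemma pquot_hered {A B : Type*} [Group A] [Group B] (f : A →* B) (hf : Function.Surjective f)
    (h : ∀ p : ℕ, p.Prime → ∀ (M : Subgroup A) [M.Normal], IsPGroup p (A ⧸ M) → commutator A ≤ M) :
    ∀ p : ℕ, p.Prime → ∀ (T : Subgroup B) [T.Normal], IsPGroup p (B ⧸ T) → commutator B ≤ T := by
  intro p hp T hT hpg
  let ψ := (QuotientGroup.mk' T).comp f
  have hψ : Function.Surjective ψ := (QuotientGroup.mk'_surjective T).comp hf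
  have hker : ψ.ker = T.comap f := by
    rw [show ψ.ker = (QuotientGroup.mk' T).ker.comap f from
      (MonoidHom.comap_ker _ _).symm, QuotientGroup.ker_mk']
  have h1 : IsPGroup p (A ⧸ ψ.ker) :=
    hpg.of_injective (QuotientGroup.quotientKerEquivOfSurjective ψ hψ).toMonoidHom
      (QuotientGroup.quotientKerEquivOfSurjective ψ hψ).injective
  have h2 : commutator A ≤ T.comap f := hker ▸ h p hp ψ.ker h1
  calc commutator B = (commutator A).map f := (commutator_map_surj f hf).symm
    _ ≤ (T.comap f).map f := Subgroup.map_mono h2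
    _ ≤ T := Subgroup.map_comap_le f T

lemma comm_le_of_nilpotent_quot {A : Type*} [Group A] [Finite A]
    (h : ∀ p : ℕ, p.Prime → ∀ (M : Subgroup A) [M.Normal], IsPGroup p (A ⧸ M) → commutator A ≤ M)
    (M : Subgroup A) [M.Normal] (hn : Group.IsNilpotent (A ⧸ M)) : commutator A ≤ M := by
  have hb : commutator (A ⧸ M) = ⊥ :=
    comm_bot_of_nilpotent (pquot_hered (QuotientGroup.mk' M) (QuotientGroup.mk'_surjective M) h) hn
  rw [← commutator_map_surj (QuotientGroup.mk' M) (QuotientGroup.mk'_surjective M),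
    Subgroup.map_eq_bot_iff, QuotientGroup.ker_mk'] at hb
  exact hb

/-- Let `Γ` be finite solvable, `G ⊴ Γ` nonabelian with `G′ ≤ O^p(G)` for all primes `p`
(equivalently, every normal subgroup of `G` with `p`-group quotient contains `G′`).
Let `K ⊴ Γ` with `K ≤ G` be maximal such that `G/K` is nonabelian, and let
`N/K = (G/K)′` (i.e. the commutator subgroup of the quotient `Q = G/K`).  Then
`N/K = (G/K)^∞` and `N/K` is the unique minimal characteristic subgroup of `G/K`. -/
theorem stmt_3 {Γ : Type*} [Group Γ] [Fintype Γ] [Group.IsSolvable Γ]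
    (G K : Subgroup Γ) [G.Normal] [K.Normal] (hKG : K ≤ G)
    (hGna : ¬ ∀ x y : ↥G, x * y = y * x)
    (hOp : ∀ (p : ℕ), p.Prime → ∀ (M : Subgroup ↥G) [M.Normal],
      IsPGroup p (↥G ⧸ M) → commutator ↥G ≤ M)
    (hKna : ¬ ∀ x y : ↥G ⧸ K.subgroupOf G, x * y = y * x)
    (hmax : ∀ L : Subgroup Γ, L.Normal → K < L → L ≤ G → commutator ↥G ≤ L.subgroupOf G) :
    (Group.IsNilpotent ((↥G ⧸ K.subgroupOf G) ⧸ commutator (↥G ⧸ K.subgroupOf G)) ∧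
      ∀ (M : Subgroup (↥G ⧸ K.subgroupOf G)) [M.Normal],
        Group.IsNilpotent ((↥G ⧸ K.subgroupOf G) ⧸ M) →
          commutator (↥G ⧸ K.subgroupOf G) ≤ M) ∧
    (commutator (↥G ⧸ K.subgroupOf G) ≠ ⊥ ∧
      ∀ H : Subgroup (↥G ⧸ K.subgroupOf G), H.Characteristic → H ≠ ⊥ →
        commutator (↥G ⧸ K.subgroupOf G) ≤ H) := by
  set Q := ↥G ⧸ K.subgroupOf G with hQ
  let φ : ↥G →* Q := QuotientGroup.mk' (K.subgroupOf G)
  have hφ : Function.Surjective φ := QuotientGroup.mk'_surjective _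
  have hQp : ∀ p : ℕ, p.Prime → ∀ (T : Subgroup Q) [T.Normal],
      IsPGroup p (Q ⧸ T) → commutator Q ≤ T := pquot_hered φ hφ hOp
  refine ⟨⟨?_, ?_⟩, ?_, ?_⟩
  · -- abelianization is nilpotent
    have hb : commutator (Q ⧸ commutator Q) = ⊥ := by
      rw [← commutator_map_surj (QuotientGroup.mk' (commutator Q))
        (QuotientGroup.mk'_surjective _), Subgroup.map_eq_bot_iff, QuotientGroup.ker_mk']
    exact nilpotent_iff_lowerCentralSeries.mpr ⟨1, by rw [lowerCentralSeries_one, hb]⟩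
  · intro M _ hn
    exact comm_le_of_nilpotent_quot hQp M hn
  · -- commutator Q ≠ ⊥
    intro hb
    apply hKna
    intro x y
    open scoped commutatorElement in
    have hm : ⁅x, y⁆ ∈ commutator Q :=
      Subgroup.commutator_mem_commutator (Subgroup.mem_top x) (Subgroup.mem_top y)
    rw [hb, Subgroup.mem_bot] at hm
    exact (commutatorElement_eq_one_iff_mul_comm.mp hm)
  · intro H hchar hne
    let P : Subgroup ↥G := H.comap φ
    have hKP : K.subgroupOf G ≤ P := by
      intro x hx
      have hx1 : φ x = 1 := (QuotientGroup.eq_one_iff x).mpr hx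
      show φ x ∈ H
      rw [hx1]; exact H.one_mem
    let L : Subgroup Γ := P.map G.subtype
    have hLG : L ≤ G := by rintro x ⟨y, -, rfl⟩; exact y.2
    have hKL : K ≤ L := fun x hx => ⟨⟨x, hKG hx⟩, hKP hx, rfl⟩
    have hLP : L.subgroupOf G = P :=
      Subgroup.comap_map_eq_self_of_injective G.subtype_injective P
    have hne' : K ≠ L := by
      intro hKLe
      apply hne
      have hPK : P = K.subgroupOf G := by rw [← hLP, ← hKLe]
      have : H = Subgroup.map φ P :=
        (Subgroup.map_comap_eq_self_of_surjective hφ H).symm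
      rw [this, hPK, Subgroup.map_eq_bot_iff, QuotientGroup.ker_mk']
    have hLnormal : L.Normal := by
      constructor
      rintro x ⟨g, hg, rfl⟩ γ
      let c : MulAut ↥G := MulAut.conjNormal γ
      have hmapK : (K.subgroupOf G).map c.toMonoidHom = K.subgroupOf G := by
        ext z
        rw [Subgroup.mem_map_equiv]
        show ((c.symm z : ↥G) : Γ) ∈ K ↔ ((z : ↥G) : Γ) ∈ K
        rw [MulAut.conjNormal_symm_apply]
        constructor
        · intro hz
          have := ‹K.Normal›.conj_mem _ hz γ
          have heq : γ * (γ⁻¹ * (z : Γ) * γ) * γ⁻¹ = (z : Γ) := by group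
          rwa [heq] at this
        · intro hz
          have := ‹K.Normal›.conj_mem _ hz γ⁻¹
          simpa [mul_assoc] using this
      let q : Q ≃* Q := QuotientGroup.congr (K.subgroupOf G) (K.subgroupOf G) c hmapK
      have hHfix : H.comap q.toMonoidHom = H := hchar.fixed q
      have hcgH : φ (c g) ∈ H := by
        have h1 : φ g ∈ H := hg
        have h2 : φ g ∈ H.comap q.toMonoidHom := by rw [hHfix]; exact h1
        have h3 : q (φ g) ∈ H := h2
        have h4 : q (φ g) = φ (c g) := rfl
        rwa [h4] at h3
      exact ⟨c g, hcgH, (MulAut.conjNormal_apply γ g)⟩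
    have hcomm : commutator ↥G ≤ P := by
      have := hmax L hLnormal (lt_of_le_of_ne hKL hne') hLG
      rwa [hLP] at this
    rw [← commutator_map_surj φ hφ]
    exact Subgroup.map_le_iff_le_comap.mpr hcomm
end

section
/- Let Γ be a finite solvable group and G ⊴ Γ a normal subgroup that is not nilpotent. Let K ⊴ Γ be maximal subject to K ⊆ G and G/K not nilpotent, and write N/K = (G/K)^∞. Then N/K is the unique subgroup of G/K that is minimal with respect to being normal in Γ, and N/K is an elementary abelian Sylow q-subgroup of G/K for some prime q. -/
open scoped commutatorElement

private lemma aux_pairwise_of_forall {α : Type*} {R : α → α → Prop} (h : ∀ a b, R a b) :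
    ∀ l : List α, l.Pairwise R := by
  intro l
  induction l with
  | nil => exact List.Pairwise.nil
  | cons a l ih => exact List.Pairwise.cons (fun b _ => h a b) ih

private lemma aux_mem_normal_sylow {H : Type*} [Group H] [Finite H] {p : ℕ} [Fact p.Prime]
    (P : Sylow p H) (hP : (P : Subgroup H).Normal) {g : H} (hg : ∃ k, g ^ p ^ k = 1) :
    g ∈ (P : Subgroup H) := by
  obtain ⟨k, hk⟩ := hg
  have hpg : IsPGroup p (Subgroup.zpowers g) := by
    rintro ⟨u, hu⟩
    obtain ⟨i, hi⟩ := Subgroup.mem_zpowers_iff.mp hu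
    refine ⟨k, Subtype.ext ?_⟩
    have : u ^ p ^ k = 1 := by
      rw [← hi, ← zpow_natCast, ← zpow_mul, mul_comm, zpow_mul, zpow_natCast, hk, one_zpow]
    simpa using this
  obtain ⟨P', hP'⟩ := hpg.exists_le_sylow
  haveI := Sylow.unique_of_normal P hP
  have hPP : P' = P := Subsingleton.elim _ _
  rw [← hPP]
  exact hP' (Subgroup.mem_zpowers g)

private lemma aux_commute_prime_pow {H : Type*} [Group H] [Finite H]
    (hnil : Group.IsNilpotent H) {p r : ℕ} [hp : Fact p.Prime] [hr : Fact r.Prime]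
    (hpr : p ≠ r) {x y : H} (hx : ∃ k, x ^ p ^ k = 1) (hy : ∃ k, y ^ r ^ k = 1) :
    Commute x y := by
  have hsyl := ((isNilpotent_of_finite_tfae (G := H)).out 0 3).mp hnil
  obtain ⟨P⟩ := (inferInstance : Nonempty (Sylow p H))
  obtain ⟨R⟩ := (inferInstance : Nonempty (Sylow r H))
  have hPn : (P : Subgroup H).Normal := hsyl p hp P
  have hRn : (R : Subgroup H).Normal := hsyl r hr R
  have hxP : x ∈ (P : Subgroup H) := aux_mem_normal_sylow P hPn hx
  have hyR : y ∈ (R : Subgroup H) := aux_mem_normal_sylow R hRn hy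
  have hcP : ⁅x, y⁆ ∈ (P : Subgroup H) := by
    have h1 : ⁅x, y⁆ = x * (y * x⁻¹ * y⁻¹) := by group
    rw [h1]
    exact mul_mem hxP (hPn.conj_mem _ (inv_mem hxP) y)
  have hcR : ⁅x, y⁆ ∈ (R : Subgroup H) := by
    have h1 : ⁅x, y⁆ = (x * y * x⁻¹) * y⁻¹ := by group
    rw [h1]
    exact mul_mem (hRn.conj_mem _ hyR x) (inv_mem hyR)
  obtain ⟨k, hk⟩ := P.isPGroup' ⟨⁅x, y⁆, hcP⟩
  obtain ⟨j, hj⟩ := R.isPGroup' ⟨⁅x, y⁆, hcR⟩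
  have h1 : ⁅x, y⁆ ^ p ^ k = 1 := by
    have := congrArg (Subtype.val) hk; simpa using this
  have h2 : ⁅x, y⁆ ^ r ^ j = 1 := by
    have := congrArg (Subtype.val) hj; simpa using this
  have hd : orderOf ⁅x, y⁆ ∣ Nat.gcd (p ^ k) (r ^ j) :=
    Nat.dvd_gcd (orderOf_dvd_of_pow_eq_one h1) (orderOf_dvd_of_pow_eq_one h2)
  have hco : Nat.Coprime (p ^ k) (r ^ j) :=
    ((Nat.coprime_primes hp.out hr.out).mpr hpr).pow k j
  rw [Nat.Coprime] at hco
  rw [hco, Nat.dvd_one] at hd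
  exact commutatorElement_eq_one_iff_commute.mp (orderOf_eq_one_iff.mp hd)

private lemma aux_commute_of_coprime {H : Type*} [Group H] [Finite H]
    (hnil : Group.IsNilpotent H) {q : ℕ} (hq : q.Prime) {x : H} (hx : ∃ k, x ^ q ^ k = 1) :
    ∀ y : H, ¬ q ∣ orderOf y → Commute x y := by
  haveI : Fact q.Prime := ⟨hq⟩
  suffices h : ∀ n, ∀ y : H, orderOf y = n → ¬ q ∣ n → Commute x y by
    intro y hy; exact h _ y rfl hy
  intro n
  induction n using Nat.strong_induction_on with
  | _ n ih =>
    intro y hyn hqn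
    have hn0 : n ≠ 0 := by rw [← hyn]; exact (orderOf_pos y).ne'
    rcases eq_or_ne n 1 with h1 | h1
    · rw [orderOf_eq_one_iff.mp (hyn.trans h1)]
      exact Commute.one_right x
    have hr : n.minFac.Prime := Nat.minFac_prime h1
    haveI : Fact n.minFac.Prime := ⟨hr⟩
    have hrn : n.minFac ∣ n := Nat.minFac_dvd n
    have hrq : q ≠ n.minFac := fun h => hqn (h ▸ hrn)
    set r := n.minFac with hrdef
    set a := r ^ n.factorization r with hadef
    set b := n / a with hbdef
    have hab : a * b = n := Nat.ordProj_mul_ordCompl_eq_self n r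
    have han : a ∣ n := Nat.ordProj_dvd n r
    have hbn : b ∣ n := Nat.div_dvd_of_dvd han
    have ha1 : 1 < a := by
      have hfac : 1 ≤ n.factorization r := by
        rw [← Nat.Prime.dvd_iff_one_le_factorization hr hn0]
        exact hrn
      calc 1 < r := hr.one_lt
        _ = r ^ 1 := (pow_one r).symm
        _ ≤ a := Nat.pow_le_pow_right hr.pos hfac
    rcases eq_or_ne b 1 with hb1 | hb1
    · -- n = a is a prime power
      have hn_eq : n = a := by rw [← hab, hb1, mul_one]
      have hy' : y ^ r ^ n.factorization r = 1 := by
        rw [← hadef, ← hn_eq, ← hyn]; exact pow_orderOf_eq_one y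
      exact aux_commute_prime_pow hnil hrq hx ⟨_, hy'⟩
    · have hb0 : 0 < b := Nat.pos_of_ne_zero (by
        intro h; rw [h, mul_zero] at hab; exact hn0 hab.symm)
      have hblt : b < n := by
        conv_rhs => rw [← hab]
        exact lt_mul_of_one_lt_left hb0 ha1
      have horder1 : orderOf (y ^ a) = b := by
        rw [orderOf_pow, hyn, Nat.gcd_eq_right han, ← hbdef]
      have horder2 : orderOf (y ^ b) = a := by
        rw [orderOf_pow, hyn, Nat.gcd_eq_right hbn, ← hab, Nat.mul_div_cancel _ hb0]
      have hcom1 : Commute x (y ^ a) :=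
        ih b hblt _ horder1 (fun hd => hqn (hd.trans hbn))
      have hcom2 : Commute x (y ^ b) := by
        refine aux_commute_prime_pow hnil hrq hx ⟨n.factorization r, ?_⟩
        rw [← hadef, ← horder2]; exact pow_orderOf_eq_one _
      have hco : Nat.Coprime a b :=
        Nat.Coprime.pow_left _ (Nat.coprime_ordCompl hr hn0)
      obtain ⟨u, v, huv⟩ : ∃ u v : ℤ, (a : ℤ) * u + (b : ℤ) * v = 1 :=
        ⟨Nat.gcdA a b, Nat.gcdB a b, by rw [← Nat.gcd_eq_gcd_ab]; exact_mod_cast hco⟩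
      have hy_eq : y = (y ^ a) ^ u * (y ^ b) ^ v := by
        rw [← zpow_natCast y a, ← zpow_natCast y b, ← zpow_mul, ← zpow_mul, ← zpow_add, huv,
          zpow_one]
      rw [hy_eq]
      exact (hcom1.zpow_right u).mul_right (hcom2.zpow_right v)

private lemma aux_eq_bot_of_commutator_eq {H : Type*} [Group H] {S N : Subgroup H}
    (hSnil : Group.IsNilpotent ↥S) (hNS : N ≤ S) (hNN : ⁅N, S⁆ = N) : N ≤ ⊥ := by
  have hmap_top : (⊤ : Subgroup ↥S).map S.subtype = S := by
    rw [← MonoidHom.range_eq_map, Subgroup.range_subtype]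
  have key : ∀ n, N ≤ ((⊤ : Subgroup ↥S).lowerCentralSeries n).map S.subtype := by
    intro n
    induction n with
    | zero =>
      simpa only [lowerCentralSeries_zero, hmap_top] using hNS
    | succ n ih =>
      have hsucc : (⊤ : Subgroup ↥S).lowerCentralSeries (n + 1) = ⁅(⊤ : Subgroup ↥S).lowerCentralSeries n, ⊤⁆ := rfl
      rw [hsucc, Subgroup.map_commutator, hmap_top]
      calc N = ⁅N, S⁆ := hNN.symm
        _ ≤ ⁅((⊤ : Subgroup ↥S).lowerCentralSeries n).map S.subtype, S⁆ := Subgroup.commutator_mono ih le_rfl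
  obtain ⟨n, hn⟩ := nilpotent_iff_lowerCentralSeries.mp hSnil
  have := key n
  rw [hn] at this
  simpa using this

private lemma aux_nilpotent_congr {H : Type*} [Group H] {A B : Subgroup H} [A.Normal] [B.Normal]
    (h : A = B) (hn : Group.IsNilpotent (H ⧸ A)) : Group.IsNilpotent (H ⧸ B) := by
  haveI := hn
  exact nilpotent_of_surjective (QuotientGroup.quotientMulEquivOfEq h).toMonoidHom
    (QuotientGroup.quotientMulEquivOfEq h).surjective

section auxdefs

variable {Γ : Type*} [Group Γ] (G K : Subgroup Γ) [G.Normal] [K.Normal]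

private def auxConj (γ : Γ) : ↥G →* ↥G where
  toFun g := ⟨γ * ↑g * γ⁻¹, Subgroup.Normal.conj_mem ‹G.Normal› ↑g g.2 γ⟩
  map_one' := by ext; simp
  map_mul' g h := by ext; push_cast; group

@[simp] private lemma auxConj_coe (γ : Γ) (g : ↥G) : (auxConj G γ g : Γ) = γ * ↑g * γ⁻¹ := rfl

private def auxPsi (γ : Γ) : (↥G ⧸ K.subgroupOf G) →* (↥G ⧸ K.subgroupOf G) :=
  QuotientGroup.map _ _ (auxConj G γ) (by
    intro x hx
    rw [Subgroup.mem_comap, Subgroup.mem_subgroupOf]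
    rw [Subgroup.mem_subgroupOf] at hx
    exact Subgroup.Normal.conj_mem ‹K.Normal› _ hx γ)

private lemma auxPsi_mk (γ : Γ) (g : ↥G) :
    auxPsi G K γ (QuotientGroup.mk g) = QuotientGroup.mk (auxConj G γ g) :=
  QuotientGroup.map_mk _ _ _ _ _

private lemma auxPsi_psi_inv (γ : Γ) (x : ↥G ⧸ K.subgroupOf G) :
    auxPsi G K γ (auxPsi G K γ⁻¹ x) = x := by
  refine QuotientGroup.induction_on x fun g => ?_
  rw [auxPsi_mk, auxPsi_mk]
  congr 1
  ext
  show γ * (γ⁻¹ * ↑g * γ⁻¹⁻¹) * γ⁻¹ = ↑g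
  group

private lemma auxPsi_inv_psi (γ : Γ) (x : ↥G ⧸ K.subgroupOf G) :
    auxPsi G K γ⁻¹ (auxPsi G K γ x) = x := by
  have := auxPsi_psi_inv G K γ⁻¹ x
  rwa [inv_inv] at this

private lemma auxPsi_surj (γ : Γ) : Function.Surjective (auxPsi G K γ) := fun x =>
  ⟨auxPsi G K γ⁻¹ x, auxPsi_psi_inv G K γ x⟩

end auxdefs

set_option maxHeartbeats 2000000 in
/-- Let `Γ` be finite solvable and `G ⊴ Γ` not nilpotent.  Let `K ⊴ Γ`, `K ≤ G`, be maximal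
such that `G/K` is not nilpotent, and let `Ninf = (G/K)^∞` (the smallest normal subgroup of
`G/K` with nilpotent quotient).  Then every nontrivial subgroup of `G/K` which is normal in
`Γ` contains `Ninf`, and `Ninf` is an elementary abelian Sylow `q`-subgroup of `G/K` for some
prime `q`. -/
theorem stmt_4 {Γ : Type*} [Group Γ] [Fintype Γ] [Group.IsSolvable Γ]
    (G K : Subgroup Γ) [G.Normal] [K.Normal] (hKG : K ≤ G)
    (hGnotnil : ¬ Group.IsNilpotent ↥G)
    (hQnotnil : ¬ Group.IsNilpotent (↥G ⧸ K.subgroupOf G))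
    (hmax : ∀ (L : Subgroup Γ) [L.Normal], K < L → L ≤ G →
      Group.IsNilpotent (↥G ⧸ L.subgroupOf G))
    (Ninf : Subgroup (↥G ⧸ K.subgroupOf G)) [Ninf.Normal]
    (hNnil : Group.IsNilpotent ((↥G ⧸ K.subgroupOf G) ⧸ Ninf))
    (hNmin : ∀ (M : Subgroup (↥G ⧸ K.subgroupOf G)) [M.Normal],
      Group.IsNilpotent ((↥G ⧸ K.subgroupOf G) ⧸ M) → Ninf ≤ M) :
    (∀ U : Subgroup (↥G ⧸ K.subgroupOf G), U ≠ ⊥ →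
      (Subgroup.map G.subtype (U.comap (QuotientGroup.mk' (K.subgroupOf G)))).Normal →
      Ninf ≤ U) ∧
    ∃ q : ℕ, q.Prime ∧ (∀ x ∈ Ninf, x ^ q = 1) ∧
      (∀ x ∈ Ninf, ∀ y ∈ Ninf, x * y = y * x) ∧
      IsPGroup q ↥Ninf ∧ ¬ q ∣ Ninf.index := by
  classical
  have hGn : G.Normal := inferInstance
  have hKn : K.Normal := inferInstance
  have hNn : Ninf.Normal := inferInstance
  set ψ : Γ → ((↥G ⧸ K.subgroupOf G) →* (↥G ⧸ K.subgroupOf G)) := auxPsi G K with hψdef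
  set mkQ : ↥G →* (↥G ⧸ K.subgroupOf G) := QuotientGroup.mk' (K.subgroupOf G) with hmkQ
  have ψ_mk : ∀ (γ : Γ) (g : ↥G), ψ γ (mkQ g) = mkQ (auxConj G γ g) := fun γ g =>
    auxPsi_mk G K γ g
  have ψinv : ∀ (γ : Γ) (x), ψ γ (ψ γ⁻¹ x) = x := fun γ x => auxPsi_psi_inv G K γ x
  have ψinv' : ∀ (γ : Γ) (x), ψ γ⁻¹ (ψ γ x) = x := fun γ x => auxPsi_inv_psi G K γ x
  have ψsurj : ∀ γ, Function.Surjective (ψ γ) := fun γ => auxPsi_surj G K γ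
  -- invariance implies the preimage in Γ is normal
  have pre_normal : ∀ U : Subgroup (↥G ⧸ K.subgroupOf G),
      (∀ (γ : Γ), ∀ x ∈ U, ψ γ x ∈ U) →
      (Subgroup.map G.subtype (U.comap mkQ)).Normal := by
    intro U hU
    constructor
    intro g hg γ
    obtain ⟨x, hx, rfl⟩ := hg
    refine ⟨auxConj G γ x, show mkQ (auxConj G γ x) ∈ U from ?_, rfl⟩
    rw [← ψ_mk γ x]
    exact hU γ _ (show mkQ x ∈ U from hx)
  -- the key principle
  have key0 : ∀ U : Subgroup (↥G ⧸ K.subgroupOf G), U ≠ ⊥ →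
      (Subgroup.map G.subtype (U.comap mkQ)).Normal → Ninf ≤ U := by
    intro U hUne hUnorm
    set L := Subgroup.map G.subtype (U.comap mkQ) with hL
    haveI hLnormal : L.Normal := hUnorm
    have hLG : L ≤ G := Subgroup.map_subtype_le _
    have hKL : K ≤ L := by
      intro k hk
      refine ⟨⟨k, hKG hk⟩, show mkQ ⟨k, hKG hk⟩ ∈ U from ?_, rfl⟩
      have h1 : mkQ ⟨k, hKG hk⟩ = 1 := (QuotientGroup.eq_one_iff _).mpr
        (by rw [Subgroup.mem_subgroupOf]; exact hk)
      rw [h1]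
      exact one_mem U
    have hKLlt : K < L := by
      rcases lt_or_eq_of_le hKL with h | h
      · exact h
      · exfalso
        apply hUne
        apply (Subgroup.eq_bot_iff_forall _).mpr
        intro u hu
        obtain ⟨g, rfl⟩ := QuotientGroup.mk'_surjective (K.subgroupOf G) u
        have hgL : (g : Γ) ∈ L := ⟨g, show mkQ g ∈ U from hu, rfl⟩
        rw [← h] at hgL
        exact (QuotientGroup.eq_one_iff _).mpr (by rw [Subgroup.mem_subgroupOf]; exact hgL)
    have hnil := hmax L hKLlt hLG
    have hLsub : L.subgroupOf G = U.comap mkQ :=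
      Subgroup.comap_map_eq_self_of_injective (Subgroup.subtype_injective G) _
    haveI hUc : (U.comap mkQ).Normal := by
      rw [← hLsub]; exact hLnormal.subgroupOf G
    have hnil' : Group.IsNilpotent (↥G ⧸ (U.comap mkQ)) := aux_nilpotent_congr hLsub hnil
    have hmapU : (U.comap mkQ).map mkQ = U :=
      Subgroup.map_comap_eq_self_of_surjective (QuotientGroup.mk'_surjective _) U
    have hker_le : K.subgroupOf G ≤ U.comap mkQ := by
      intro x hx
      show mkQ x ∈ U
      have : mkQ x = 1 := (QuotientGroup.eq_one_iff _).mpr hx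
      rw [this]; exact one_mem U
    have e := QuotientGroup.quotientQuotientEquivQuotient (K.subgroupOf G) (U.comap mkQ) hker_le
    haveI := hnil'
    haveI hUn : U.Normal := by
      rw [← hmapU]; exact hUc.map mkQ (QuotientGroup.mk'_surjective _)
    have h2 : Group.IsNilpotent ((↥G ⧸ K.subgroupOf G) ⧸ (U.comap mkQ).map mkQ) :=
      nilpotent_of_surjective e.symm.toMonoidHom e.symm.surjective
    exact hNmin U (aux_nilpotent_congr hmapU h2)
  -- Ninf is nontrivial
  have hNbot : Ninf ≠ ⊥ := by
    intro h
    apply hQnotnil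
    have h1 : Group.IsNilpotent ((↥G ⧸ K.subgroupOf G) ⧸ (⊥ : Subgroup (↥G ⧸ K.subgroupOf G))) :=
      aux_nilpotent_congr h hNnil
    haveI := h1
    exact nilpotent_of_surjective (QuotientGroup.quotientBot).toMonoidHom
      (QuotientGroup.quotientBot).surjective
  -- Ninf is invariant
  have hNle_map : ∀ γ : Γ, Ninf ≤ Ninf.map (ψ γ) := by
    intro γ
    haveI hMn : (Ninf.map (ψ γ)).Normal := hNn.map (ψ γ) (ψsurj γ)
    have hle : Ninf ≤ (Ninf.map (ψ γ)).comap (ψ γ) := fun x hx =>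
      Subgroup.mem_comap.mpr (Subgroup.mem_map_of_mem _ hx)
    refine hNmin _ ?_
    refine nilpotent_of_surjective (QuotientGroup.map Ninf (Ninf.map (ψ γ)) (ψ γ) hle) ?_
    intro z
    obtain ⟨y, rfl⟩ := QuotientGroup.mk_surjective z
    obtain ⟨x, rfl⟩ := ψsurj γ y
    exact ⟨QuotientGroup.mk x, QuotientGroup.map_mk _ _ _ _ _⟩
  have InvN : ∀ (γ : Γ), ∀ x ∈ Ninf, ψ γ x ∈ Ninf := by
    intro γ x hx
    obtain ⟨n, hn, hnx⟩ := hNle_map γ⁻¹ hx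
    rw [← hnx, ψinv γ n]
    exact hn
  -- helper lemmas about invariance
  have mapInv : ∀ (V : Subgroup (↥G ⧸ K.subgroupOf G)),
      (∀ γ, ∀ x ∈ V, ψ γ x ∈ V) → ∀ γ, Subgroup.map (ψ γ) V ≤ V := by
    intro V h γ y hy
    obtain ⟨z, hz, rfl⟩ := hy
    exact h γ z hz
  have commInv : ∀ (V W : Subgroup (↥G ⧸ K.subgroupOf G)),
      (∀ γ, ∀ x ∈ V, ψ γ x ∈ V) → (∀ γ, ∀ x ∈ W, ψ γ x ∈ W) →
      ∀ γ, ∀ x ∈ ⁅V, W⁆, ψ γ x ∈ ⁅V, W⁆ := by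
    intro V W hV hW γ x hx
    have h1 : Subgroup.map (ψ γ) ⁅V, W⁆ ≤ ⁅V, W⁆ := by
      rw [Subgroup.map_commutator]
      exact Subgroup.commutator_mono (mapInv V hV γ) (mapInv W hW γ)
    exact h1 (Subgroup.mem_map_of_mem _ hx)
  -- the center of Q is trivial
  have hZbot : ∀ x : (↥G ⧸ K.subgroupOf G), (∀ y, y * x = x * y) → x = 1 := by
    intro x hx
    by_contra hxne
    have hcne : Subgroup.center (↥G ⧸ K.subgroupOf G) ≠ ⊥ := by
      intro h
      apply hxne
      have hmem : x ∈ Subgroup.center (↥G ⧸ K.subgroupOf G) :=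
        Subgroup.mem_center_iff.mpr hx
      rw [h] at hmem
      simpa using hmem
    have hInvC : ∀ γ, ∀ z ∈ Subgroup.center (↥G ⧸ K.subgroupOf G),
        ψ γ z ∈ Subgroup.center (↥G ⧸ K.subgroupOf G) := by
      intro γ z hz
      rw [Subgroup.mem_center_iff] at hz ⊢
      intro g
      obtain ⟨g', rfl⟩ := ψsurj γ g
      rw [← map_mul, ← map_mul, hz g']
    have hle := key0 _ hcne (pre_normal _ hInvC)
    apply hQnotnil
    exact isNilpotent_of_ker_le_center (QuotientGroup.mk' Ninf)
      (by rw [QuotientGroup.ker_mk']; exact hle)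
  -- Ninf is abelian
  have habel : ∀ x ∈ Ninf, ∀ y ∈ Ninf, x * y = y * x := by
    have hD : ⁅Ninf, Ninf⁆ = ⊥ := by
      by_contra hD
      have hle := key0 _ hD (pre_normal _ (commInv Ninf Ninf InvN InvN))
      have hds : ∀ n, Ninf ≤ derivedSeries (↥G ⧸ K.subgroupOf G) n := by
        intro n
        induction n with
        | zero => exact le_top
        | succ n ih =>
          rw [derivedSeries_succ]
          exact hle.trans (Subgroup.commutator_mono ih ih)
      obtain ⟨n, hn⟩ := (inferInstance : Group.IsSolvable (↥G ⧸ K.subgroupOf G)).solvable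
      have := hds n
      rw [hn] at this
      exact hNbot (le_bot_iff.mp this)
    intro x hx y hy
    have h1 := Subgroup.commutator_mem_commutator hx hy
    rw [hD] at h1
    exact commutatorElement_eq_one_iff_mul_comm.mp (by simpa using h1)
  -- find the prime q
  obtain ⟨x₀, hx₀N, hx₀ne⟩ := (Subgroup.bot_or_exists_ne_one Ninf).resolve_left hNbot
  haveI hfinQ : Finite (↥G ⧸ K.subgroupOf G) := Quotient.finite _
  have hord_ne : orderOf x₀ ≠ 1 := fun h => hx₀ne (orderOf_eq_one_iff.mp h)
  set q := (orderOf x₀).minFac with hqdef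
  have hq : q.Prime := Nat.minFac_prime hord_ne
  haveI : Fact q.Prime := ⟨hq⟩
  have hqdvd : q ∣ orderOf x₀ := Nat.minFac_dvd _
  set y₀ := x₀ ^ (orderOf x₀ / q) with hy₀
  have hy₀N : y₀ ∈ Ninf := Subgroup.pow_mem _ hx₀N _
  have hy₀q : y₀ ^ q = 1 := by
    rw [hy₀, ← pow_mul, Nat.div_mul_cancel hqdvd, pow_orderOf_eq_one]
  have hy₀ne : y₀ ≠ 1 := by
    intro h
    have h2 : orderOf x₀ ∣ orderOf x₀ / q := orderOf_dvd_of_pow_eq_one (by rw [← hy₀, h])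
    have h3 : orderOf x₀ / q < orderOf x₀ := Nat.div_lt_self (orderOf_pos x₀) hq.one_lt
    have h4 : 0 < orderOf x₀ / q := Nat.div_pos (Nat.le_of_dvd (orderOf_pos x₀) hqdvd) hq.pos
    exact absurd (Nat.le_of_dvd h4 h2) (not_le.mpr h3)
  -- the q-torsion subgroup of Ninf
  set T : Subgroup (↥G ⧸ K.subgroupOf G) :=
    { carrier := {x | x ∈ Ninf ∧ x ^ q = 1},
      one_mem' := ⟨one_mem _, one_pow q⟩,
      mul_mem' := by
        rintro a b ⟨haN, haq⟩ ⟨hbN, hbq⟩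
        refine ⟨mul_mem haN hbN, ?_⟩
        have hc : Commute a b := habel a haN b hbN
        rw [hc.mul_pow, haq, hbq, one_mul]
      inv_mem' := by
        rintro a ⟨haN, haq⟩
        exact ⟨inv_mem haN, by rw [inv_pow, haq, inv_one]⟩ } with hTdef
  have hTne : T ≠ ⊥ := by
    intro h
    apply hy₀ne
    have : y₀ ∈ T := ⟨hy₀N, hy₀q⟩
    rw [h] at this
    simpa using this
  have hInvT : ∀ γ, ∀ x ∈ T, ψ γ x ∈ T := by
    rintro γ x ⟨hxN, hxq⟩
    refine ⟨InvN γ x hxN, ?_⟩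
    rw [← map_pow, hxq, map_one]
  have hNleT := key0 _ hTne (pre_normal _ hInvT)
  have hpow : ∀ x ∈ Ninf, x ^ q = 1 := fun x hx => (hNleT hx).2
  have hNP : IsPGroup q ↥Ninf := by
    intro g
    refine ⟨1, ?_⟩
    rw [pow_one]
    exact Subtype.ext (by simpa using hpow ↑g g.2)
  -- the preimage S of the Sylow q-subgroup of Q/Ninf
  set mkN : (↥G ⧸ K.subgroupOf G) →* ((↥G ⧸ K.subgroupOf G) ⧸ Ninf) :=
    QuotientGroup.mk' Ninf with hmkN
  obtain ⟨Sb⟩ := (inferInstance : Nonempty (Sylow q ((↥G ⧸ K.subgroupOf G) ⧸ Ninf)))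
  have htfae := isNilpotent_of_finite_tfae (G := (↥G ⧸ K.subgroupOf G) ⧸ Ninf)
  have hnorm_syl : ∀ (p : ℕ) (_hp : Fact p.Prime) (P : Sylow p ((↥G ⧸ K.subgroupOf G) ⧸ Ninf)),
      (P : Subgroup ((↥G ⧸ K.subgroupOf G) ⧸ Ninf)).Normal := (htfae.out 0 3).mp hNnil
  have hSbn : (Sb : Subgroup ((↥G ⧸ K.subgroupOf G) ⧸ Ninf)).Normal := hnorm_syl q ⟨hq⟩ Sb
  set S : Subgroup (↥G ⧸ K.subgroupOf G) :=
    (Sb : Subgroup ((↥G ⧸ K.subgroupOf G) ⧸ Ninf)).comap mkN with hSdef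
  haveI hSnormal : S.Normal := hSbn.comap _
  have hNS : Ninf ≤ S := by
    intro n hn
    show mkN n ∈ (Sb : Subgroup _)
    have h1 : mkN n = 1 := (QuotientGroup.eq_one_iff _).mpr hn
    rw [h1]
    exact one_mem _
  have hSq1 : ∀ x ∈ S, ∃ k, (mkN x) ^ q ^ k = 1 := by
    intro x hx
    obtain ⟨k, hk⟩ := Sb.isPGroup' ⟨mkN x, hx⟩
    exact ⟨k, by simpa using congrArg Subtype.val hk⟩
  have hScharF : ∀ x ∈ S, ∃ k, x ^ q ^ k ∈ Ninf := by
    intro x hx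
    obtain ⟨k, hk⟩ := hSq1 x hx
    refine ⟨k, ?_⟩
    rw [← QuotientGroup.eq_one_iff (G := ↥G ⧸ K.subgroupOf G) (N := Ninf)]
    rw [← map_pow] at hk
    exact hk
  have hScharB : ∀ x : (↥G ⧸ K.subgroupOf G), (∃ k, x ^ q ^ k ∈ Ninf) → x ∈ S := by
    rintro x ⟨k, hk⟩
    show mkN x ∈ (Sb : Subgroup _)
    refine aux_mem_normal_sylow Sb hSbn ⟨k, ?_⟩
    rw [← map_pow]
    exact (QuotientGroup.eq_one_iff _).mpr hk
  have hSq : ∀ x ∈ S, ∃ k, x ^ q ^ k = 1 := by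
    intro x hx
    obtain ⟨k, hk⟩ := hScharF x hx
    refine ⟨k + 1, ?_⟩
    rw [pow_succ, pow_mul]
    exact hpow _ hk
  have InvS : ∀ γ, ∀ x ∈ S, ψ γ x ∈ S := by
    intro γ x hx
    obtain ⟨k, hk⟩ := hScharF x hx
    refine hScharB _ ⟨k, ?_⟩
    rw [← map_pow]
    exact InvN γ _ hk
  have hSP : IsPGroup q ↥S := by
    intro g
    obtain ⟨k, hk⟩ := hSq ↑g g.2
    exact ⟨k, Subtype.ext (by simpa using hk)⟩
  have hSidx : ¬ q ∣ S.index := by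
    have h1 : S.index = (Sb : Subgroup ((↥G ⧸ K.subgroupOf G) ⧸ Ninf)).index :=
      Subgroup.index_comap_of_surjective (Sb : Subgroup ((↥G ⧸ K.subgroupOf G) ⧸ Ninf))
        (f := mkN) (QuotientGroup.mk'_surjective Ninf)
    rw [h1]
    exact Sb.not_dvd_index
  -- Ninf commutes with S
  have hNSc : ⁅Ninf, S⁆ = ⊥ := by
    by_contra hne
    have h1 := key0 _ hne (pre_normal _ (commInv Ninf S InvN InvS))
    have h2 : ⁅Ninf, S⁆ ≤ Ninf := Subgroup.commutator_le_left _ _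
    have heq : ⁅Ninf, S⁆ = Ninf := le_antisymm h2 h1
    have hnilS : Group.IsNilpotent ↥S := hSP.isNilpotent
    exact hNbot (le_bot_iff.mp (aux_eq_bot_of_commutator_eq hnilS hNS heq))
  have hcommNS : ∀ n ∈ Ninf, ∀ s ∈ S, n * s = s * n := by
    intro n hn s hs
    have h1 := Subgroup.commutator_mem_commutator hn hs
    rw [hNSc] at h1
    exact commutatorElement_eq_one_iff_mul_comm.mp (by simpa using h1)
  -- Ninf = [Ninf, Q]
  have hNtop : ⁅Ninf, (⊤ : Subgroup (↥G ⧸ K.subgroupOf G))⁆ = Ninf := by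
    have hle : ⁅Ninf, ⊤⁆ ≤ Ninf := Subgroup.commutator_le_left _ _
    refine le_antisymm hle ?_
    refine hNmin _ ?_
    refine isNilpotent_of_ker_le_center
      (QuotientGroup.map ⁅Ninf, ⊤⁆ Ninf (MonoidHom.id _) (by simpa using hle)) ?_
    intro ξ hξ
    obtain ⟨x, rfl⟩ := QuotientGroup.mk'_surjective _ ξ
    have hxN : x ∈ Ninf := by
      rw [MonoidHom.mem_ker, QuotientGroup.map_mk'] at hξ
      exact (QuotientGroup.eq_one_iff _).mp (by simpa using hξ)
    rw [Subgroup.mem_center_iff]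
    intro η
    obtain ⟨y, rfl⟩ := QuotientGroup.mk'_surjective _ η
    have h1 : ⁅x, y⁆ ∈ ⁅Ninf, (⊤ : Subgroup (↥G ⧸ K.subgroupOf G))⁆ :=
      Subgroup.commutator_mem_commutator hxN (Subgroup.mem_top y)
    have h2 : (QuotientGroup.mk' ⁅Ninf, (⊤ : Subgroup (↥G ⧸ K.subgroupOf G))⁆) ⁅x, y⁆ = 1 :=
      (QuotientGroup.eq_one_iff _).mpr h1
    rw [map_commutatorElement] at h2
    exact (commutatorElement_eq_one_iff_mul_comm.mp h2).symm
  -- commutators of S-elements with elements of coprime order land in Ninf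
  have hcomm_coprime : ∀ z ∈ S, ∀ h : (↥G ⧸ K.subgroupOf G), ¬ q ∣ orderOf (mkN h) →
      ⁅z, h⁆ ∈ Ninf := by
    intro z hz h hh
    have hcomm := aux_commute_of_coprime hNnil hq (hSq1 z hz) (mkN h) hh
    have h2 : mkN ⁅z, h⁆ = 1 := by
      rw [map_commutatorElement]
      exact commutatorElement_eq_one_iff_commute.mpr hcomm
    exact (QuotientGroup.eq_one_iff _).mp h2
  -- Schur-Zassenhaus complement
  obtain ⟨nS, hnS⟩ := IsPGroup.iff_card.mp hSP
  have hcop : Nat.Coprime (Nat.card ↥S) S.index := by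
    rw [hnS]
    exact Nat.Coprime.pow_left _ ((Nat.Prime.coprime_iff_not_dvd hq).mpr hSidx)
  obtain ⟨H₀, hH₀⟩ := Subgroup.exists_right_complement'_of_coprime hcop
  set m := Nat.card ↥H₀ with hmdef
  have hm_idx : m = S.index := by
    have h1 : Nat.card ↥S * m = Nat.card ↥S * S.index := by
      rw [hmdef, hH₀.card_mul, Subgroup.card_mul_index]
    exact Nat.eq_of_mul_eq_mul_left Nat.card_pos h1
  have hqm : ¬ q ∣ m := by rw [hm_idx]; exact hSidx
  have hpow_m : ∀ h ∈ H₀, h ^ m = 1 := by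
    intro h hh
    have h1 : (⟨h, hh⟩ : ↥H₀) ^ m = 1 := pow_card_eq_one'
    simpa using congrArg Subtype.val h1
  have hdecomp : ∀ x : (↥G ⧸ K.subgroupOf G), ∃ s ∈ S, ∃ h ∈ H₀, x = s * h := by
    intro x
    obtain ⟨⟨s, h⟩, hsh⟩ := hH₀.2 x
    exact ⟨s, s.2, h, h.2, hsh.symm⟩
  have hordH₀ : ∀ h ∈ H₀, ¬ q ∣ orderOf (mkN h) := by
    intro h hh hdvd
    have h1 : orderOf h ∣ m := orderOf_dvd_of_pow_eq_one (hpow_m h hh)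
    have h2 : orderOf (mkN h) ∣ orderOf h := orderOf_map_dvd _ h
    exact hqm (hdvd.trans (h2.trans h1))
  -- the averaging covering lemma
  have cover : ∀ (X : Subgroup (↥G ⧸ K.subgroupOf G)), X.Normal → X ≤ S → ∀ z ∈ X,
      ∃ w n, w ∈ X ∧ (∀ h ∈ H₀, h * w * h⁻¹ = w) ∧ n ∈ Ninf ∧ z = w * n := by
    intro X hXn hXS z hz
    set f : ↥H₀ → (↥G ⧸ K.subgroupOf G) := fun h => ↑h * z * (↑h)⁻¹ with hfdef
    have hfm : ∀ h : ↥H₀, f h ∈ X := fun h => hXn.conj_mem z hz ↑h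
    have hfz : ∀ h : ↥H₀, ∃ c ∈ Ninf, f h = z * c := by
      intro h
      have hcz : ⁅(h : (↥G ⧸ K.subgroupOf G)), z⁆ ∈ Ninf := by
        have h1 := hcomm_coprime z (hXS hz) ↑h (hordH₀ ↑h h.2)
        have h2 : ⁅(h : (↥G ⧸ K.subgroupOf G)), z⁆ = ⁅z, (h : (↥G ⧸ K.subgroupOf G))⁆⁻¹ := by
          rw [commutatorElement_inv]
        rw [h2]
        exact inv_mem h1
      refine ⟨z⁻¹ * (↑h * z * (↑h)⁻¹), ?_, by rw [hfdef]; group⟩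
      have h3 : z⁻¹ * (↑h * z * (↑h)⁻¹) = z⁻¹ * ⁅(h : (↥G ⧸ K.subgroupOf G)), z⁆ * z := by
        group
      rw [h3]
      have h4 := hNn.conj_mem _ hcz z⁻¹
      simpa using h4
    choose c hcN hcEq using hfz
    have hzc : ∀ h, Commute z (c h) := fun h =>
      (show Commute (c h) z from hcommNS (c h) (hcN h) z (hXS hz)).symm
    have hcc : ∀ h h', Commute (c h) (c h') := fun h h' =>
      show Commute (c h) (c h') from habel _ (hcN h) _ (hcN h')
    have hff : ∀ h h', Commute (f h) (f h') := by
      intro h h'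
      rw [hcEq h, hcEq h']
      have h1 : Commute z (z * c h') := (Commute.refl z).mul_right (hzc h')
      have h2 : Commute (c h) (z * c h') := ((hzc h).symm).mul_right (hcc h h')
      exact h1.mul_left h2
    set l : List ↥H₀ := Finset.univ.toList with hldef
    set w := (l.map f).prod with hwdef
    have hwX : w ∈ X := by
      refine Subgroup.list_prod_mem _ ?_
      intro x hx
      obtain ⟨h, _, rfl⟩ := List.mem_map.mp hx
      exact hfm h
    have hprod : ∀ L : List ↥H₀, ∃ n ∈ Ninf, (L.map f).prod = z ^ L.length * n := by
      intro L
      induction L with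
      | nil => exact ⟨1, one_mem _, by simp⟩
      | cons a L ih =>
        obtain ⟨n, hnN, hLn⟩ := ih
        refine ⟨c a * n, mul_mem (hcN a) hnN, ?_⟩
        rw [List.map_cons, List.prod_cons, hLn, hcEq a, List.length_cons]
        have hcz : c a * z ^ L.length = z ^ L.length * c a :=
          (hzc a).symm.pow_right L.length
        calc z * c a * (z ^ L.length * n) = z * (c a * z ^ L.length) * n := by group
          _ = z * (z ^ L.length * c a) * n := by rw [hcz]
          _ = z ^ (L.length + 1) * (c a * n) := by rw [pow_succ']; group
    obtain ⟨n, hnN, hweq⟩ := hprod l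
    have hlen : l.length = m := by
      rw [hldef, Finset.length_toList, Finset.card_univ, hmdef, Nat.card_eq_fintype_card]
    have hwinv : ∀ h ∈ H₀, h * w * h⁻¹ = w := by
      intro h hh
      have hφ : ∀ u : (↥G ⧸ K.subgroupOf G),
          h * u * h⁻¹ = (MulAut.conj h).toMonoidHom u := fun u => rfl
      rw [hφ w, hwdef, map_list_prod, List.map_map]
      set σ : ↥H₀ → ↥H₀ := fun a => ⟨h, hh⟩ * a with hσdef
      have hσinj : Function.Injective σ := fun a b hab => mul_left_cancel hab
      have hcomp : ((MulAut.conj h).toMonoidHom ∘ f) = f ∘ σ := by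
        funext a
        show h * (↑a * z * (↑a)⁻¹) * h⁻¹ = ↑(σ a) * z * (↑(σ a))⁻¹
        have : ((σ a : ↥H₀) : (↥G ⧸ K.subgroupOf G)) = h * ↑a := rfl
        rw [this]
        group
      rw [hcomp, ← List.map_map]
      have hperm : (l.map σ).Perm l := by
        apply List.perm_of_nodup_nodup_toFinset_eq ((Finset.nodup_toList _).map hσinj)
          (Finset.nodup_toList _)
        ext a
        simp only [List.mem_toFinset, List.mem_map, hldef, Finset.mem_toList, Finset.mem_univ,
          iff_true, true_and]
        exact ⟨⟨h, hh⟩⁻¹ * a, by rw [hσdef]; group⟩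
      have hpair : ((l.map σ).map f).Pairwise Commute :=
        List.pairwise_map.mpr (aux_pairwise_of_forall (fun a b => hff a b) _)
      exact (hperm.map f).prod_eq' hpair
    obtain ⟨k, hk⟩ := hSq z (hXS hz)
    have hcopz : Nat.Coprime m (q ^ k) :=
      Nat.Coprime.pow_right _ (Nat.coprime_comm.mp ((Nat.Prime.coprime_iff_not_dvd hq).mpr hqm))
    obtain ⟨u, v, huv⟩ : ∃ u v : ℤ, (m : ℤ) * u + ((q ^ k : ℕ) : ℤ) * v = 1 :=
      ⟨Nat.gcdA m (q ^ k), Nat.gcdB m (q ^ k), by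
        rw [← Nat.gcd_eq_gcd_ab]
        exact_mod_cast hcopz⟩
    have hwn : Commute w n := (show Commute n w from hcommNS n hnN w (hXS hwX)).symm
    have hzm : z ^ m = w * n⁻¹ := by
      rw [hwdef, ← hlen, hweq]
      group
    have hz_eq : z = (z ^ m) ^ u * (z ^ q ^ k) ^ v := by
      rw [← zpow_natCast z m, ← zpow_natCast z (q ^ k), ← zpow_mul, ← zpow_mul, ← zpow_add,
        huv, zpow_one]
    refine ⟨w ^ u, (n⁻¹) ^ u, Subgroup.zpow_mem _ hwX u, ?_,
      Subgroup.zpow_mem _ (inv_mem hnN) u, ?_⟩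
    · intro h hh
      have h2 : h * w ^ u * h⁻¹ = (h * w * h⁻¹) ^ u := by
        have hφ : ∀ x : (↥G ⧸ K.subgroupOf G),
            h * x * h⁻¹ = (MulAut.conj h).toMonoidHom x := fun x => rfl
        rw [hφ, hφ, map_zpow]
      rw [h2, hwinv h hh]
    · rw [hz_eq, hk, one_zpow, mul_one, hzm, (hwn.inv_right).mul_zpow]
  -- elements of S centralizing S lie in Ninf
  have hZc : ∀ z, z ∈ S → (∀ s ∈ S, z * s = s * z) → z ∈ Ninf := by
    intro z hzS hzc
    set Zc : Subgroup (↥G ⧸ K.subgroupOf G) :=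
      S ⊓ Subgroup.centralizer (S : Set (↥G ⧸ K.subgroupOf G)) with hZcdef
    have hZcn : Zc.Normal := by
      constructor
      intro a ha g
      rw [hZcdef, Subgroup.mem_inf] at ha ⊢
      obtain ⟨haS, hac⟩ := ha
      rw [Subgroup.mem_centralizer_iff] at hac
      refine ⟨hSnormal.conj_mem a haS g, ?_⟩
      rw [Subgroup.mem_centralizer_iff]
      intro s hs
      have h1 : g⁻¹ * s * g ∈ S := by
        have := hSnormal.conj_mem s hs g⁻¹
        simpa using this
      have h2 := hac _ h1
      have h3 : s * (g * a * g⁻¹) = g * ((g⁻¹ * s * g) * a) * g⁻¹ := by group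
      rw [h3, h2]
      group
    have hzZc : z ∈ Zc := by
      rw [hZcdef, Subgroup.mem_inf]
      exact ⟨hzS, Subgroup.mem_centralizer_iff.mpr (fun s hs => (hzc s hs).symm)⟩
    obtain ⟨w, n, hwZc, hwH, hnN, hzeq⟩ := cover Zc hZcn inf_le_left z hzZc
    have hw1 : w = 1 := by
      apply hZbot
      intro y
      obtain ⟨s, hs, h, hh, rfl⟩ := hdecomp y
      rw [hZcdef, Subgroup.mem_inf] at hwZc
      have hws : s * w = w * s := Subgroup.mem_centralizer_iff.mp hwZc.2 s hs
      have hwh : h * w = w * h := mul_inv_eq_iff_eq_mul.mp (hwH h hh)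
      calc s * h * w = s * (h * w) := by group
        _ = s * (w * h) := by rw [hwh]
        _ = s * w * h := by group
        _ = w * s * h := by rw [hws]
        _ = w * (s * h) := by group
    rw [hw1, one_mul] at hzeq
    rw [hzeq]
    exact hnN
  -- the main claim : S ≤ Ninf
  have hSleN : S ≤ Ninf := by
    by_contra hSN
    set Z₂ : Subgroup (↥G ⧸ K.subgroupOf G) :=
      { carrier := {x | x ∈ S ∧ ∀ s ∈ S, ⁅x, s⁆ ∈ Ninf},
        one_mem' := ⟨one_mem _, fun s hs => by
          have h1 : ⁅(1 : (↥G ⧸ K.subgroupOf G)), s⁆ = 1 := by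
            simp only [commutatorElement_def]; group
          rw [h1]; exact one_mem _⟩,
        mul_mem' := by
          rintro a b ⟨haS, ha⟩ ⟨hbS, hb⟩
          refine ⟨mul_mem haS hbS, fun s hs => ?_⟩
          have h1 : ⁅a * b, s⁆ = a * ⁅b, s⁆ * a⁻¹ * ⁅a, s⁆ := by
            simp only [commutatorElement_def]; group
          rw [h1]
          exact mul_mem (hNn.conj_mem _ (hb s hs) a) (ha s hs)
        inv_mem' := by
          rintro a ⟨haS, ha⟩
          refine ⟨inv_mem haS, fun s hs => ?_⟩
          have h1 : ⁅a⁻¹, s⁆ = a⁻¹ * ⁅a, s⁆⁻¹ * (a⁻¹)⁻¹ := by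
            simp only [commutatorElement_def]; group
          rw [h1]
          exact hNn.conj_mem _ (inv_mem (ha s hs)) a⁻¹ } with hZ₂def
    have hZ₂S : Z₂ ≤ S := fun x hx => hx.1
    have hZ₂n : Z₂.Normal := by
      constructor
      intro a ha g
      obtain ⟨haS, haC⟩ := ha
      refine ⟨hSnormal.conj_mem a haS g, fun s hs => ?_⟩
      have h1 : g⁻¹ * s * g ∈ S := by simpa using hSnormal.conj_mem s hs g⁻¹
      have h2 : ⁅g * a * g⁻¹, s⁆ = g * ⁅a, g⁻¹ * s * g⁆ * g⁻¹ := by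
        simp only [commutatorElement_def]; group
      rw [h2]
      exact hNn.conj_mem _ (haC _ h1) g
    have hInvZ₂ : ∀ γ, ∀ x ∈ Z₂, ψ γ x ∈ Z₂ := by
      rintro γ x ⟨hxS, hx⟩
      refine ⟨InvS γ x hxS, fun s hs => ?_⟩
      have hs' : ψ γ⁻¹ s ∈ S := InvS γ⁻¹ s hs
      have h1 : s = ψ γ (ψ γ⁻¹ s) := (ψinv γ s).symm
      rw [h1, ← map_commutatorElement]
      exact InvN γ _ (hx _ hs')
    obtain ⟨s₀, hs₀S, hs₀N⟩ : ∃ s ∈ S, s ∉ Ninf := by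
      by_contra hc
      push_neg at hc
      exact hSN hc
    haveI hnt : Nontrivial (↥S ⧸ Ninf.subgroupOf S) := by
      refine ⟨⟨QuotientGroup.mk ⟨s₀, hs₀S⟩, 1, ?_⟩⟩
      intro hcon
      apply hs₀N
      have h1 : (⟨s₀, hs₀S⟩ : ↥S) ∈ Ninf.subgroupOf S := (QuotientGroup.eq_one_iff _).mp hcon
      rwa [Subgroup.mem_subgroupOf] at h1
    haveI : (Ninf.subgroupOf S).Normal := hNn.subgroupOf S
    have hPGq : IsPGroup q (↥S ⧸ Ninf.subgroupOf S) := hSP.to_quotient _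
    haveI hcenter := hPGq.center_nontrivial
    obtain ⟨⟨xb, hxb⟩, hxbne⟩ := exists_ne (1 : ↥(Subgroup.center (↥S ⧸ Ninf.subgroupOf S)))
    obtain ⟨x₀', hx₀'⟩ := QuotientGroup.mk'_surjective _ xb
    have hx₂S : (x₀' : (↥G ⧸ K.subgroupOf G)) ∈ S := x₀'.2
    have hx₂N : (x₀' : (↥G ⧸ K.subgroupOf G)) ∉ Ninf := by
      intro hmem
      apply hxbne
      refine Subtype.ext ?_
      show xb = 1
      rw [← hx₀']
      exact (QuotientGroup.eq_one_iff _).mpr (by rwa [Subgroup.mem_subgroupOf])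
    have hx₂Z : (x₀' : (↥G ⧸ K.subgroupOf G)) ∈ Z₂ := by
      refine ⟨hx₂S, fun s hs => ?_⟩
      have hcent' := Subgroup.mem_center_iff.mp hxb
      have h1 : ⁅xb, QuotientGroup.mk' (Ninf.subgroupOf S) ⟨s, hs⟩⁆ = 1 :=
        commutatorElement_eq_one_iff_mul_comm.mpr (hcent' _).symm
      rw [← hx₀', ← map_commutatorElement] at h1
      have h2 : ⁅x₀', (⟨s, hs⟩ : ↥S)⁆ ∈ Ninf.subgroupOf S := (QuotientGroup.eq_one_iff _).mp h1
      rw [Subgroup.mem_subgroupOf] at h2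
      have h4 : ((⁅x₀', (⟨s, hs⟩ : ↥S)⁆ : ↥S) : (↥G ⧸ K.subgroupOf G)) =
          ⁅(x₀' : (↥G ⧸ K.subgroupOf G)), s⁆ := by
        simp only [commutatorElement_def]
        push_cast
        rfl
      rwa [h4] at h2
    have hXleN : ⁅Z₂, S⁆ ≤ Ninf :=
      Subgroup.commutator_le.mpr (fun g₁ h₁ g₂ h₂ => h₁.2 g₂ h₂)
    rcases eq_or_ne ⁅Z₂, S⁆ ⊥ with hX | hX
    · apply hx₂N
      apply hZc _ hx₂S
      intro s hs
      have h1 := Subgroup.commutator_mem_commutator hx₂Z hs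
      rw [hX] at h1
      exact commutatorElement_eq_one_iff_mul_comm.mp (by simpa using h1)
    · have hXN : ⁅Z₂, S⁆ = Ninf :=
        le_antisymm hXleN (key0 _ hX (pre_normal _ (commInv _ _ hInvZ₂ InvS)))
      set W : Subgroup (↥G ⧸ K.subgroupOf G) :=
        Z₂ ⊓ Subgroup.centralizer (H₀ : Set (↥G ⧸ K.subgroupOf G)) with hWdef
      have hWZ₂ : W ≤ Z₂ := inf_le_left
      have hleW : ⁅Z₂, S⁆ ≤ ⁅W, S⁆ := by
        refine Subgroup.commutator_le.mpr ?_
        intro z hz s hs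
        obtain ⟨w, n, hwZ, hwH, hnN, hzeq⟩ := cover Z₂ hZ₂n hZ₂S z hz
        have hwW : w ∈ W := by
          rw [hWdef, Subgroup.mem_inf]
          exact ⟨hwZ, Subgroup.mem_centralizer_iff.mpr
            (fun h hh => mul_inv_eq_iff_eq_mul.mp (hwH h hh))⟩
        have hns : n * s = s * n := hcommNS n hnN s hs
        have h2 : ⁅z, s⁆ = ⁅w, s⁆ := by
          rw [hzeq]
          simp only [commutatorElement_def]
          have e1 : w * n * s * (w * n)⁻¹ * s⁻¹ = w * (n * s) * (n⁻¹ * w⁻¹) * s⁻¹ := by group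
          rw [e1, hns]
          group
        rw [h2]
        exact Subgroup.commutator_mem_commutator hwW hs
      have hWS : ⁅W, S⁆ = Ninf :=
        le_antisymm ((Subgroup.commutator_mono hWZ₂ le_rfl).trans hXleN) (hXN ▸ hleW)
      have h3a : ⁅⁅S, H₀⁆, W⁆ = ⊥ := by
        have h1 : ⁅S, H₀⁆ ≤ Ninf := Subgroup.commutator_le.mpr
          (fun s hs h hh => hcomm_coprime s hs h (hordH₀ h hh))
        have h2 : ⁅Ninf, W⁆ ≤ ⊥ := Subgroup.commutator_le.mpr (fun n hn w hw => by
          have hcw : n * w = w * n := hcommNS n hn w (hZ₂S (hWZ₂ hw))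
          exact Subgroup.mem_bot.mpr (commutatorElement_eq_one_iff_mul_comm.mpr hcw))
        exact le_bot_iff.mp ((Subgroup.commutator_mono h1 le_rfl).trans h2)
      have h3b : ⁅⁅H₀, W⁆, S⁆ = ⊥ := by
        have h1 : ⁅H₀, W⁆ = ⊥ := le_bot_iff.mp (Subgroup.commutator_le.mpr (fun h hh w hw => by
          have hw' := hw
          rw [hWdef, Subgroup.mem_inf] at hw'
          have hcw : h * w = w * h := Subgroup.mem_centralizer_iff.mp hw'.2 h hh
          exact Subgroup.mem_bot.mpr (commutatorElement_eq_one_iff_mul_comm.mpr hcw)))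
        rw [h1]
        exact Subgroup.commutator_bot_left _
      have h3 : ⁅⁅W, S⁆, H₀⁆ = ⊥ :=
        Subgroup.commutator_commutator_eq_bot_of_rotate h3a h3b
      rw [hWS] at h3
      apply hNbot
      have hfin : Ninf ≤ ⊥ := by
        conv_lhs => rw [← hNtop]
        refine Subgroup.commutator_le.mpr ?_
        intro nx hnx x _
        obtain ⟨s, hs, h, hh, rfl⟩ := hdecomp x
        have hns : nx * s = s * nx := hcommNS nx hnx s hs
        have hnh : ⁅nx, h⁆ = 1 := by
          have h5 := Subgroup.commutator_mem_commutator hnx hh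
          rw [h3] at h5
          simpa using h5
        have h6 : ⁅nx, s * h⁆ = s * ⁅nx, h⁆ * s⁻¹ := by
          simp only [commutatorElement_def]
          have e1 : nx * (s * h) * nx⁻¹ * (s * h)⁻¹ = (nx * s) * h * nx⁻¹ * h⁻¹ * s⁻¹ := by
            group
          rw [e1, hns]
          group
        refine Subgroup.mem_bot.mpr ?_
        rw [h6, hnh]
        group
      exact le_bot_iff.mp hfin
  -- conclusion
  have hNeqS : Ninf = S := le_antisymm hNS hSleN
  refine ⟨key0, q, hq, hpow, habel, hNP, ?_⟩
  rw [hNeqS]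
  exact hSidx
end

section
/- Let a finite group A act on a finite group V by automorphisms. If X is a set of positive integers closed under least common multiples (i.e., a,b ∈ X implies lcm(a,b) ∈ X) and X satisfies the two-prime hypothesis, and every element of X other than possibly a maximum element m divides m, then |X| ≤ 1 + 2^4 = 17. Equivalently: any lcm-closed set of positive integers satisfying the two-prime hypothesis has at most 17 elements. -/
private lemma omega_mono' {a b : ℕ} (h : a ∣ b) (hb : b ≠ 0) :
    a.primeFactorsList.length ≤ b.primeFactorsList.length :=
  (Nat.primeFactorsList_sublist_of_dvd h hb).length_le

private lemma omega_lcm_le' {a b : ℕ} (ha : a ≠ 0) (hb : b ≠ 0) :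
    (Nat.lcm a b).primeFactorsList.length ≤
      a.primeFactorsList.length + b.primeFactorsList.length := by
  have h1 : Nat.lcm a b ∣ a * b := Nat.lcm_dvd (Dvd.intro b rfl) (Dvd.intro_left a rfl)
  have h2 := omega_mono' h1 (Nat.mul_ne_zero ha hb)
  have h3 := (Nat.perm_primeFactorsList_mul ha hb).length_eq
  rw [h3, List.length_append] at h2
  exact h2

private lemma card_divisors_le_two_pow {n : ℕ} (hn : n ≠ 0) :
    n.divisors.card ≤ 2 ^ n.primeFactorsList.length := by
  rw [Nat.card_divisors hn]
  have h1 : n.primeFactors.prod (n.factorization · + 1)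
      ≤ n.primeFactors.prod (fun p => 2 ^ n.factorization p) := by
    apply Finset.prod_le_prod'
    intro p _
    exact Nat.lt_two_pow_self
  have h2 : n.primeFactors.prod (fun p => 2 ^ n.factorization p)
      = 2 ^ (n.primeFactors.sum fun p => n.factorization p) :=
    Finset.prod_pow_eq_pow_sum _ _ _
  have h3 : (n.primeFactors.sum fun p => n.factorization p)
      = n.primeFactorsList.length := by
    have h4 : (n.primeFactors.sum fun p => n.factorization p)
        = n.factorization.sum fun _ k => k := by
      rw [Finsupp.sum]
      rfl
    rw [h4, Nat.factorization_eq_primeFactorsList_multiset]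
    have h5 := Multiset.toFinsupp_sum_eq (n.primeFactorsList : Multiset ℕ)
    rw [Multiset.coe_card] at h5
    exact h5
  calc n.primeFactors.prod (n.factorization · + 1)
      ≤ n.primeFactors.prod (fun p => 2 ^ n.factorization p) := h1
    _ = 2 ^ n.primeFactorsList.length := by rw [h2, h3]

private lemma finset_lcm_mem {X : Set ℕ}
    (hlcm : ∀ a ∈ X, ∀ b ∈ X, Nat.lcm a b ∈ X)
    (F : Finset ℕ) (hne : F.Nonempty) (hF : ↑F ⊆ X) : F.lcm id ∈ X := by
  induction hne using Finset.Nonempty.cons_induction with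
  | singleton a =>
      rw [Finset.lcm_singleton]
      simpa using hF (by simp : a ∈ ({a} : Finset ℕ))
  | cons a s ha hs ih =>
      rw [Finset.cons_eq_insert, Finset.lcm_insert]
      have haX : a ∈ X := hF (by simp)
      have hsX : ↑s ⊆ X := fun x hx => hF (by simp [hx])
      exact hlcm a haX _ (ih hsX)

private lemma bdd_of_finsets {Z : Set ℕ} {k : ℕ}
    (h : ∀ F : Finset ℕ, ↑F ⊆ Z → F.card ≤ k) : Z.Finite ∧ Z.ncard ≤ k := by
  have hfin : Z.Finite := by
    rw [← Set.not_infinite]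
    intro hinf
    set f := hinf.natEmbedding with hf
    have hinj : Function.Injective fun i : ℕ => (f i : ℕ) := by
      intro a b hab
      exact f.injective (Subtype.ext hab)
    have hc : ((Finset.range (k + 1)).image fun i => (f i : ℕ)).card ≤ k := by
      apply h
      intro x hx
      simp only [Finset.coe_image, Set.mem_image, Finset.mem_coe] at hx
      obtain ⟨i, _, rfl⟩ := hx
      exact (f i).2
    rw [Finset.card_image_of_injective _ hinj, Finset.card_range] at hc
    omega
  refine ⟨hfin, ?_⟩
  rw [Set.ncard_eq_toFinset_card _ hfin]
  exact h hfin.toFinset (by simp)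

/-- small-set lemma: lcm-closed, positive, all Ω ≤ 2 implies ≤ 4 elements -/
private lemma small_case {Z : Set ℕ} (hpos : ∀ x ∈ Z, 0 < x)
    (hlcm : ∀ a ∈ Z, ∀ b ∈ Z, Nat.lcm a b ∈ Z)
    (hsm : ∀ z ∈ Z, z.primeFactorsList.length ≤ 2) :
    Z.Finite ∧ Z.ncard ≤ 4 := by
  apply bdd_of_finsets
  intro F hF
  rcases F.eq_empty_or_nonempty with rfl | hne
  · simp
  · have hL : F.lcm id ∈ Z := finset_lcm_mem hlcm F hne hF
    have hL0 : F.lcm id ≠ 0 := (hpos _ hL).ne'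
    have hsub : F ⊆ (F.lcm id).divisors := by
      intro a haF
      rw [Nat.mem_divisors]
      exact ⟨Finset.dvd_lcm haF, hL0⟩
    calc F.card ≤ (F.lcm id).divisors.card := Finset.card_le_card hsub
      _ ≤ 2 ^ (F.lcm id).primeFactorsList.length := card_divisors_le_two_pow hL0
      _ ≤ 2 ^ 2 := Nat.pow_le_pow_right (by norm_num) (hsm _ hL)
      _ = 4 := by norm_num

/-- Any lcm-closed set of positive integers satisfying the two-prime hypothesis
(`Ω(gcd(a,b)) > 2 → a = b`) has at most `1 + 2^4 = 17` elements. -/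
theorem stmt_10 (X : Set ℕ) (hpos : ∀ x ∈ X, 0 < x)
    (hlcm : ∀ a ∈ X, ∀ b ∈ X, Nat.lcm a b ∈ X)
    (h2p : ∀ a ∈ X, ∀ b ∈ X, 2 < (Nat.gcd a b).primeFactorsList.length → a = b) :
    X.Finite ∧ X.ncard ≤ 17 := by
  classical
  -- uniqueness of elements with Ω ≥ 3
  have huniq : ∀ a ∈ X, ∀ b ∈ X, 2 < a.primeFactorsList.length →
      2 < b.primeFactorsList.length → a = b := by
    intro a ha b hb h2a h2b
    have hl := hlcm a ha b hb
    have h1 : a = Nat.lcm a b := by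
      apply h2p a ha _ hl
      rwa [Nat.gcd_eq_left (Nat.dvd_lcm_left a b)]
    have h2 : b = Nat.lcm a b := by
      apply h2p b hb _ hl
      rwa [Nat.gcd_eq_left (Nat.dvd_lcm_right a b)]
    exact h1.trans h2.symm
  by_cases hM : ∃ M ∈ X, 2 < M.primeFactorsList.length
  · obtain ⟨M, hMX, hMbig⟩ := hM
    have hM0 : M ≠ 0 := (hpos _ hMX).ne'
    by_cases hM4 : M.primeFactorsList.length ≤ 4
    · -- everything divides M
      have hsub : X ⊆ ↑M.divisors := by
        intro a ha
        have hl := hlcm a ha M hMX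
        have hl0 : Nat.lcm a M ≠ 0 := (hpos _ hl).ne'
        have hlbig : 2 < (Nat.lcm a M).primeFactorsList.length :=
          lt_of_lt_of_le hMbig (omega_mono' (Nat.dvd_lcm_right a M) hl0)
        have heq : Nat.lcm a M = M := huniq _ hl _ hMX hlbig hMbig
        rw [Finset.mem_coe, Nat.mem_divisors]
        exact ⟨heq ▸ Nat.dvd_lcm_left a M, hM0⟩
      have hfin : X.Finite := Set.Finite.subset (M.divisors : Finset ℕ).finite_toSet hsub
      refine ⟨hfin, ?_⟩
      calc X.ncard ≤ (↑M.divisors : Set ℕ).ncard :=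
            Set.ncard_le_ncard hsub (M.divisors : Finset ℕ).finite_toSet
        _ = M.divisors.card := by rw [Set.ncard_coe_finset]
        _ ≤ 2 ^ M.primeFactorsList.length := card_divisors_le_two_pow hM0
        _ ≤ 2 ^ 4 := Nat.pow_le_pow_right (by norm_num) hM4
        _ ≤ 17 := by norm_num
    · -- Ω(M) ≥ 5
      push_neg at hM4
      set Y := X \ {M} with hY
      have hYsmall : ∀ z ∈ Y, z.primeFactorsList.length ≤ 2 := by
        intro z hz
        by_contra hzc
        push_neg at hzc
        exact hz.2 (huniq z hz.1 M hMX hzc hMbig)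
      have hYlcm : ∀ a ∈ Y, ∀ b ∈ Y, Nat.lcm a b ∈ Y := by
        intro a ha b hb
        have hl := hlcm a ha.1 b hb.1
        refine ⟨hl, ?_⟩
        intro hcon
        have : (Nat.lcm a b).primeFactorsList.length ≤ 4 := by
          calc (Nat.lcm a b).primeFactorsList.length
              ≤ a.primeFactorsList.length + b.primeFactorsList.length :=
                omega_lcm_le' (hpos _ ha.1).ne' (hpos _ hb.1).ne'
            _ ≤ 2 + 2 := Nat.add_le_add (hYsmall a ha) (hYsmall b hb)
            _ = 4 := rfl
        rw [Set.mem_singleton_iff] at hcon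
        rw [hcon] at this
        omega
      have hYpos : ∀ x ∈ Y, 0 < x := fun x hx => hpos x hx.1
      obtain ⟨hYfin, hYcard⟩ := small_case hYpos hYlcm hYsmall
      have hXeq : X = insert M Y := by
        rw [hY, Set.insert_diff_singleton, Set.insert_eq_self.2 hMX]
      rw [hXeq]
      refine ⟨hYfin.insert M, ?_⟩
      calc (insert M Y).ncard ≤ Y.ncard + 1 := Set.ncard_insert_le M Y
        _ ≤ 4 + 1 := Nat.add_le_add_right hYcard 1
        _ ≤ 17 := by norm_num
  · push_neg at hM
    obtain ⟨hfin, hcard⟩ := small_case hpos hlcm hM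
    exact ⟨hfin, le_trans hcard (by norm_num)⟩
end
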